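/- arXiv:2304.14242 — 4 statements merged into one kernel-verified Lean document; each statement's English description precedes it below -/
import Mathlib

section
/- Let q be an odd prime power, n an odd positive integer, s = ∑_{i=1}^{(n-1)/2} q^{2i}, and s_0 an integer with gcd(s_0, q^n - 1) = gcd(1 + s, q^n - 1). Let h : F_{q^n} → F_{q^n} be a bijection with h(0) = 0, and let ℓ(x) = ∑_{i=0}^{n-1} b_i x^{q^i} be a q-linear polynomial over F_{q^n} inducing a bijection of F_{q^n}, with transpose ℓ′(x) = ∑_{i=0}^{n-1} (b_i x)^{q^{n-i}}. Suppose there exist α, β ∈ F_{q^n} with N(α) + N(β) ≠ 0 (where N(x) = ∏_{i=0}^{n-1} x^{q^i}) such that x^s · ℓ′(x)^q = α·h(x)^{s_0} + β·h(x)^{s_0·q^2} for all x ∈ F_{q^n}. Then the map x ↦ ℓ(x)·x^{-(q+1)} (where x^{-1} denotes x^{q^n-2}, so 0 maps to 0) is a bijection of F_{q^n}. -/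
open Finset

/-- Bezout: if `u^a = 1` and `u^b = 1` in a group then `u^gcd(a,b) = 1` (ℤ version). -/
private lemma aux_zpow_gcd {G : Type*} [Group G] (u : G) (a b : ℤ)
    (ha : u ^ a = 1) (hb : u ^ b = 1) : u ^ (Int.gcd a b : ℤ) = 1 := by
  rw [Int.gcd_eq_gcd_ab, zpow_add, zpow_mul, zpow_mul, ha, hb, one_zpow, one_zpow, one_mul]

private lemma aux_pow_gcd {G : Type*} [Group G] (u : G) (a b : ℕ)
    (ha : u ^ a = 1) (hb : u ^ b = 1) : u ^ (Nat.gcd a b) = 1 := by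
  have h := aux_zpow_gcd u (a : ℤ) (b : ℤ) (by rw [zpow_natCast]; exact ha)
    (by rw [zpow_natCast]; exact hb)
  rw [Int.gcd_natCast_natCast] at h
  rw [← zpow_natCast]
  exact h

/-- `∑_{i<2k} x^i = (1+x)·∑_{j<k} x^{2j}` -/
private lemma aux_sum_even (x : ℤ) (k : ℕ) :
    ∑ i ∈ range (2 * k), x ^ i = (x + 1) * ∑ j ∈ range k, x ^ (2 * j) := by
  induction k with
  | zero => simp
  | succ k ih =>
    have h1 : 2 * (k + 1) = (2 * k) + 1 + 1 := by ring
    rw [h1, Finset.sum_range_succ, Finset.sum_range_succ, ih, Finset.sum_range_succ]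
    have h2 : x ^ (2 * k + 1) = x ^ (2 * k) * x := by rw [pow_succ]
    rw [h2]
    ring

/-- `1 + ∑_{j<m} x^{2(j+1)} = ∑_{j<m+1} x^{2j}` -/
private lemma aux_one_add_s (x : ℤ) (m : ℕ) :
    1 + ∑ j ∈ range m, x ^ (2 * (j + 1)) = ∑ j ∈ range (m + 1), x ^ (2 * j) := by
  rw [Finset.sum_range_succ']
  simp [add_comm]


/-- Existence of a nondegenerate additive "absolute trace" on a finite field. -/
private lemma aux_trace (F : Type*) [Field F] [Fintype F] (p M : ℕ) [Fact p.Prime] [CharP F p]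
    (hM : 0 < M) (hcard : Fintype.card F = p ^ M) :
    ∃ Tr : F →+ F, (∀ x : F, Tr x = ∑ j ∈ range M, x ^ p ^ j) ∧
      (∀ (r : ℕ) (x : F), Tr (x ^ p ^ r) = Tr x) ∧ (∃ x, Tr x ≠ 0) := by
  classical
  have hp : p.Prime := Fact.out
  have hfrA : ∀ (t : ℕ) (x y : F), (x + y) ^ p ^ t = x ^ p ^ t + y ^ p ^ t := by
    intro t x y
    have := map_add (iterateFrobenius F p t) x y
    simpa only [iterateFrobenius_def] using this
  set Trf : F → F := fun x => ∑ j ∈ range M, x ^ p ^ j with hTrf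
  have hadd : ∀ x y : F, Trf (x + y) = Trf x + Trf y := by
    intro x y
    show (∑ j ∈ range M, (x + y) ^ p ^ j) = (∑ j ∈ range M, x ^ p ^ j) + ∑ j ∈ range M, y ^ p ^ j
    rw [← Finset.sum_add_distrib]
    exact Finset.sum_congr rfl fun j _ => hfrA j x y
  have hxM : ∀ x : F, x ^ p ^ M = x := by
    intro x
    have := FiniteField.pow_card x (K := F)
    rwa [hcard] at this
  have hstep : ∀ x : F, Trf (x ^ p) = Trf x := by
    intro x
    have key : Trf (x ^ p) - Trf x = 0 := by
      show (∑ j ∈ range M, (x ^ p) ^ p ^ j) - ∑ j ∈ range M, x ^ p ^ j = 0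
      rw [← Finset.sum_sub_distrib]
      have h1 : ∀ j ∈ range M, (x ^ p) ^ p ^ j - x ^ p ^ j
          = (fun j => x ^ p ^ (j + 1)) j - (fun j => x ^ p ^ j) j := by
        intro j _
        have h2 : (x ^ p) ^ p ^ j = x ^ p ^ (j + 1) := by
          rw [← pow_mul, ← pow_succ']
        simp only [h2]
      rw [Finset.sum_congr rfl h1, Finset.sum_range_sub (fun j => x ^ p ^ j)]
      rw [hxM, pow_zero, pow_one, sub_self]
    exact sub_eq_zero.mp key
  refine ⟨AddMonoidHom.mk' Trf hadd, fun x => rfl, ?_, ?_⟩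
  · intro r
    induction r with
    | zero => intro x; simp
    | succ r ih =>
      intro x
      have h3 : x ^ p ^ (r + 1) = (x ^ p ^ r) ^ p := by rw [← pow_mul, pow_succ]
      show Trf (x ^ p ^ (r + 1)) = Trf x
      rw [h3, hstep]
      exact ih x
  · by_contra hcon
    push_neg at hcon
    have hcon' : ∀ x : F, Trf x = 0 := fun x => hcon x
    have hpp1 : 1 < p := hp.one_lt
    set P : Polynomial F := ∑ j ∈ range M, Polynomial.X ^ p ^ j with hP
    have hPcoeff : P.coeff (p ^ (M - 1)) = 1 := by
      rw [hP, Polynomial.finset_sum_coeff]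
      have h1 : ∀ j ∈ range M, (Polynomial.X ^ p ^ j : Polynomial F).coeff (p ^ (M - 1))
          = if j = M - 1 then 1 else 0 := by
        intro j _
        rw [Polynomial.coeff_X_pow]
        by_cases hj : j = M - 1
        · simp [hj]
        · have hne : p ^ (M - 1) ≠ p ^ j :=
            fun hEq => hj (Nat.pow_right_injective hp.two_le hEq).symm
          simp [hj, hne]
      rw [Finset.sum_congr rfl h1, Finset.sum_ite_eq' (range M) (M - 1) (fun _ => (1 : F))]
      simp [Finset.mem_range, Nat.sub_lt hM Nat.one_pos]
    have hPne : P ≠ 0 := by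
      intro h0
      rw [h0, Polynomial.coeff_zero] at hPcoeff
      exact one_ne_zero hPcoeff.symm
    have hPdeg : P.natDegree ≤ p ^ (M - 1) := by
      rw [hP]
      apply Polynomial.natDegree_sum_le_of_forall_le
      intro j hj
      rw [Polynomial.natDegree_X_pow]
      exact Nat.pow_le_pow_right (by omega) (by
        have := Finset.mem_range.mp hj; omega)
    have hroots : ∀ x : F, Polynomial.IsRoot P x := by
      intro x
      have h3 : Polynomial.eval x P = Trf x := by
        rw [hP, Polynomial.eval_finset_sum]
        apply Finset.sum_congr rfl
        intro j _
        rw [Polynomial.eval_pow, Polynomial.eval_X]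
      show Polynomial.eval x P = 0
      rw [h3, hcon']
    have hcardle : Fintype.card F ≤ p ^ (M - 1) := by
      have h5 : (Finset.univ : Finset F) ⊆ P.roots.toFinset := by
        intro x _
        rw [Multiset.mem_toFinset, Polynomial.mem_roots hPne]
        exact hroots x
      calc Fintype.card F = (Finset.univ : Finset F).card := Finset.card_univ.symm
        _ ≤ P.roots.toFinset.card := Finset.card_le_card h5
        _ ≤ Multiset.card P.roots := P.roots.toFinset_card_le
        _ ≤ P.natDegree := Polynomial.card_roots' P
        _ ≤ p ^ (M - 1) := hPdeg
    have hlt : p ^ (M - 1) < p ^ M := Nat.pow_lt_pow_right hpp1 (by omega)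
    rw [hcard] at hcardle
    omega

set_option maxHeartbeats 2000000 in
/-- For odd `q`, odd `n`, `s = ∑_{i=1}^{(n-1)/2} q^{2i}`, an integer `s₀` with
`gcd(s₀, q^n-1) = gcd(1+s, q^n-1)`, a bijection `h` of `F_{q^n}` with `h(0) = 0`, and a
`q`-linear bijection `ℓ` with transpose `ℓ′`, if
`x^s·ℓ′(x)^q = α·h(x)^{s₀} + β·h(x)^{s₀q^2}` for some `α, β` with `N(α)+N(β) ≠ 0`, then
`x ↦ ℓ(x)·x^{-(q+1)}` is a bijection of `F_{q^n}`. -/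
theorem stmt_16 (q n : ℕ) (hq : IsPrimePow q) (hqodd : Odd q) (hn : Odd n)
    (F : Type*) [Field F] [Fintype F] (hF : Fintype.card F = q ^ n)
    (s : ℕ) (hs : s = ∑ i ∈ Finset.range ((n - 1) / 2), q ^ (2 * (i + 1)))
    (s₀ : ℤ) (hgcd : s₀.gcd (q ^ n - 1) = Nat.gcd (1 + s) (q ^ n - 1))
    (h : F → F) (hbij : Function.Bijective h) (h0 : h 0 = 0)
    (b : ℕ → F)
    (ℓ : F → F) (hℓ : ∀ x, ℓ x = ∑ i ∈ Finset.range n, b i * x ^ q ^ i)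
    (hℓbij : Function.Bijective ℓ)
    (ℓ' : F → F) (hℓ' : ∀ x, ℓ' x = ∑ i ∈ Finset.range n, (b i * x) ^ q ^ (n - i))
    (α β : F)
    (hαβ : (∏ i ∈ Finset.range n, α ^ q ^ i) + (∏ i ∈ Finset.range n, β ^ q ^ i) ≠ 0)
    (heq : ∀ x : F, x ^ s * (ℓ' x) ^ q = α * h x ^ s₀ + β * h x ^ (s₀ * (q : ℤ) ^ 2)) :
    Function.Bijective fun x : F => ℓ x * (x⁻¹) ^ (q + 1) := by
  classical
  -- ## basic numerology
  obtain ⟨m, hm⟩ := hn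
  have hn1 : n = 2 * m + 1 := by omega
  have hm2 : (n - 1) / 2 = m := by omega
  have hq2 : 2 ≤ q := hq.two_le
  have hq3 : 3 ≤ q := by
    rcases hqodd with ⟨t, ht⟩; omega
  have hnpos : 0 < n := by omega
  set e : ℕ := ∑ i ∈ range n, q ^ i with he_def
  set T : ℕ := q ^ n - 1 with hT_def
  have hqn1 : 1 ≤ q ^ n := Nat.one_le_pow _ _ (by omega)
  have hTZ : (T : ℤ) = (q : ℤ) ^ n - 1 := by
    rw [hT_def]; push_cast [hqn1]; ring
  have hsZ : (s : ℤ) = ∑ j ∈ range m, (q : ℤ) ^ (2 * (j + 1)) := by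
    rw [hs, hm2]; push_cast; rfl
  have heZ : (e : ℤ) = ∑ i ∈ range n, (q : ℤ) ^ i := by
    rw [he_def]; push_cast; rfl
  -- structural ℤ identities
  have key3Z : ((q : ℤ) + 1) * (1 + (s : ℤ)) = (e : ℤ) + (q : ℤ) ^ n := by
    rw [hsZ, heZ, aux_one_add_s, ← aux_sum_even]
    have h2 : 2 * (m + 1) = n + 1 := by omega
    rw [h2, Finset.sum_range_succ]
  have key2Z : (e : ℤ) * ((q : ℤ) - 1) = (q : ℤ) ^ n - 1 := by
    rw [heZ]; exact geom_sum_mul (q : ℤ) n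
  have key1Z : (1 + (s : ℤ)) * ((q : ℤ) ^ 2 - 1) = (q : ℤ) ^ (n + 1) - 1 := by
    rw [hsZ, aux_one_add_s]
    have h3 : ∀ j : ℕ, (q : ℤ) ^ (2 * j) = ((q : ℤ) ^ 2) ^ j := fun j => by
      rw [← pow_mul]
    calc (∑ j ∈ range (m + 1), (q : ℤ) ^ (2 * j)) * ((q : ℤ) ^ 2 - 1)
        = (∑ j ∈ range (m + 1), ((q : ℤ) ^ 2) ^ j) * ((q : ℤ) ^ 2 - 1) := by
          congr 1; exact Finset.sum_congr rfl fun j _ => h3 j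
      _ = ((q : ℤ) ^ 2) ^ (m + 1) - 1 := geom_sum_mul _ _
      _ = (q : ℤ) ^ (n + 1) - 1 := by rw [← pow_mul]; congr 2; omega
  -- ℕ versions of exponent identities
  have keyA : (q + 1) * s + q = e + T := by
    have : ((q + 1) * s + q : ℤ) = (e : ℤ) + (T : ℤ) := by
      rw [hTZ]; push_cast; linear_combination key3Z
    exact_mod_cast this
  have keyB : (q + 1) * (q + s) = q ^ 2 + e + T := by
    have : ((q + 1) * (q + s) : ℤ) = (q : ℤ) ^ 2 + (e : ℤ) + (T : ℤ) := by
      rw [hTZ]; push_cast; linear_combination key3Z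
    exact_mod_cast this
  have keyC : e * q ^ 2 = e + (q + 1) * T := by
    have : (e * q ^ 2 : ℤ) = (e : ℤ) + ((q : ℤ) + 1) * (T : ℤ) := by
      rw [hTZ]; push_cast; linear_combination ((q : ℤ) + 1) * key2Z
    exact_mod_cast this
  have keyD : e * (q - 1) = T := by
    have hq1 : (1 : ℕ) ≤ q := by omega
    have : (e * (q - 1) : ℤ) = (T : ℤ) := by
      rw [hTZ]; push_cast [hq1]; linarith [key2Z]
    exact_mod_cast this
  -- e ≥ 1, T > e, 1+s ≤ e
  have hepos : 1 ≤ e := by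
    rw [he_def]
    calc 1 = q ^ 0 := by norm_num
    _ ≤ ∑ i ∈ range n, q ^ i := Finset.single_le_sum (f := fun i => q ^ i)
          (fun i _ => Nat.zero_le _) (Finset.mem_range.mpr hnpos)
  have hTpos : 0 < T := by
    have : 1 * 1 ≤ e * (q - 1) := Nat.mul_le_mul hepos (by omega)
    omega
  have heltT : e < T := by
    have : e * 2 ≤ e * (q - 1) := Nat.mul_le_mul_left e (by omega)
    omega
  have h1se : 1 + s ≤ e := by
    have hdiff : (e : ℤ) * ((q : ℤ) ^ 2 - 1) - (1 + (s : ℤ)) * ((q : ℤ) ^ 2 - 1)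
        = (q : ℤ) ^ n - (q : ℤ) := by
      linear_combination ((q : ℤ) + 1) * key2Z - key1Z
    have hqq : (q : ℤ) ≤ (q : ℤ) ^ n := by
      exact_mod_cast Nat.le_self_pow (by omega) q
    have h1 : (1 + (s : ℤ)) * ((q : ℤ) ^ 2 - 1) ≤ (e : ℤ) * ((q : ℤ) ^ 2 - 1) := by
      linarith
    have h2 : (0 : ℤ) < (q : ℤ) ^ 2 - 1 := by
      have : (2 : ℤ) ≤ (q : ℤ) := by exact_mod_cast hq2
      nlinarith
    have h3 : (1 + (s : ℤ)) ≤ (e : ℤ) := le_of_mul_le_mul_right h1 h2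
    exact_mod_cast h3
  have h1sT : 1 + s < T := by omega
  -- the gcd d
  set d : ℕ := Nat.gcd (1 + s) T with hd_def
  have hdpos : 0 < d := Nat.gcd_pos_of_pos_left _ (by omega)
  have hds : d ∣ 1 + s := Nat.gcd_dvd_left _ _
  have hdT : d ∣ T := Nat.gcd_dvd_right _ _
  have hs₀ne : s₀ ≠ 0 := by
    intro h0'
    rw [h0'] at hgcd
    have : Int.gcd 0 ((q : ℤ) ^ n - 1) = T := by
      rw [Int.gcd_zero_left, ← hTZ, Int.natAbs_natCast]
    rw [this] at hgcd
    have : d ≤ 1 + s := Nat.le_of_dvd (by omega) hds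
    omega
  have hdq1 : d ∣ q - 1 := by
    have h1 : (d : ℤ) ∣ (q : ℤ) ^ (n + 1) - 1 := by
      have : (d : ℤ) ∣ (1 + (s : ℤ)) := by exact_mod_cast Int.natCast_dvd_natCast.mpr hds
      calc (d : ℤ) ∣ (1 + (s : ℤ)) * ((q : ℤ) ^ 2 - 1) := Dvd.dvd.mul_right this _
        _ = (q : ℤ) ^ (n + 1) - 1 := key1Z
    have h2 : (d : ℤ) ∣ (q : ℤ) ^ (n + 1) - (q : ℤ) := by
      have : (d : ℤ) ∣ (T : ℤ) := Int.natCast_dvd_natCast.mpr hdT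
      rw [hTZ] at this
      calc (d : ℤ) ∣ ((q : ℤ) ^ n - 1) * (q : ℤ) := Dvd.dvd.mul_right this _
        _ = (q : ℤ) ^ (n + 1) - (q : ℤ) := by ring
    have h3 : (d : ℤ) ∣ (q : ℤ) - 1 := by
      have := dvd_sub h2 h1
      have h4 : (q : ℤ) ^ (n + 1) - (q : ℤ) - ((q : ℤ) ^ (n + 1) - 1) = -((q:ℤ) - 1) := by ring
      rw [h4] at this
      exact (dvd_neg.mp this)
    have h5 : ((q - 1 : ℕ) : ℤ) = (q : ℤ) - 1 := by push_cast [show 1 ≤ q by omega]; ring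
    rw [← h5] at h3
    exact_mod_cast h3
  have hdqs : d ∣ q + s := by
    have : q + s = (1 + s) + (q - 1) := by omega
    rw [this]; exact Nat.dvd_add hds hdq1
  have hgcd_qs_q1 : Nat.gcd (q + s) (q - 1) = d := by
    have h1 : q + s = (1 + s) + (q - 1) := by omega
    rw [h1, Nat.gcd_add_self_left]
    -- Nat.gcd (1+s) (q-1) = d
    apply Nat.dvd_antisymm
    · exact Nat.dvd_gcd (Nat.gcd_dvd_left _ _)
        (dvd_trans (Nat.gcd_dvd_right _ _) ⟨e, by rw [← keyD]; ring⟩)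
    · exact Nat.dvd_gcd hds hdq1
  have hcop_de : Nat.Coprime d e := by
    rw [Nat.Coprime]
    by_contra hne
    obtain ⟨r, hrp, hrd⟩ := Nat.exists_prime_and_dvd hne
    have hr_d : r ∣ d := hrd.trans (Nat.gcd_dvd_left _ _)
    have hr_e : r ∣ e := hrd.trans (Nat.gcd_dvd_right _ _)
    have hr_q1 : r ∣ q - 1 := hr_d.trans hdq1
    have hr_1s : r ∣ 1 + s := hr_d.trans hds
    have hq_mod : (q : ZMod r) = 1 := by
      have h1 : ((q - 1 : ℕ) : ZMod r) = 0 := (ZMod.natCast_eq_zero_iff _ _).mpr hr_q1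
      have h2 : q = (q - 1) + 1 := by omega
      rw [h2]; push_cast [h1]; ring
    have he_mod : ((e : ℕ) : ZMod r) = (n : ℕ) := by
      rw [he_def]; push_cast
      rw [Finset.sum_congr rfl fun i _ => by rw [hq_mod, one_pow]]
      simp
    have hs_mod : ((1 + s : ℕ) : ZMod r) = ((1 + m : ℕ) : ZMod r) := by
      rw [hs, hm2]; push_cast
      rw [Finset.sum_congr rfl fun i _ => by rw [hq_mod, one_pow]]
      simp
    have hr_n : r ∣ n := by
      have h1 : ((e : ℕ) : ZMod r) = 0 := (ZMod.natCast_eq_zero_iff _ _).mpr hr_e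
      rw [h1] at he_mod
      exact (ZMod.natCast_eq_zero_iff _ _).mp he_mod.symm
    have hr_1m : r ∣ 1 + m := by
      have h1 : ((1 + s : ℕ) : ZMod r) = 0 := (ZMod.natCast_eq_zero_iff _ _).mpr hr_1s
      rw [h1] at hs_mod
      exact (ZMod.natCast_eq_zero_iff _ _).mp hs_mod.symm
    have hr1 : r ∣ 1 := by
      have h2 : r ∣ 2 * (1 + m) := Dvd.dvd.mul_left hr_1m 2
      have h3 : 2 * (1 + m) = n + 1 := by omega
      rw [h3] at h2
      have h5 := Nat.dvd_sub h2 hr_n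
      have h6 : n + 1 - n = 1 := by omega
      rwa [h6] at h5
    exact Nat.Prime.one_lt hrp |>.ne' (Nat.dvd_one.mp hr1)
  have hq1d : d * ((q - 1) / d) = q - 1 := Nat.mul_div_cancel' hdq1
  have hdTT : d * (T / d) = T := Nat.mul_div_cancel' hdT
  set c : ℕ := (q - 1) / d with hc_def
  have hc1 : q - 1 = d * c := (Nat.mul_div_cancel' hdq1).symm
  have hTd_eq : T / d = e * c := by
    have h1 : T = (e * c) * d := by
      calc T = e * (q - 1) := keyD.symm
        _ = e * (d * c) := by rw [hc1]
        _ = (e * c) * d := by ring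
    exact Nat.div_eq_of_eq_mul_left hdpos h1
  have hgcd_q1_Td : Nat.gcd (q - 1) (T / d) = c := by
    rw [hTd_eq, hc1]
    calc Nat.gcd (d * c) (e * c)
        = Nat.gcd d e * c := by rw [Nat.gcd_mul_right]
      _ = 1 * c := by rw [hcop_de]
      _ = c := one_mul _
  have hcop_qT : Nat.Coprime q T := by
    have h1 : Nat.gcd q T ∣ q ^ n := (Nat.gcd_dvd_left q T).trans (dvd_pow_self q (by omega))
    have h2 : Nat.gcd q T ∣ T := Nat.gcd_dvd_right q T
    have h3 : Nat.gcd q T ∣ 1 := by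
      have h4 : q ^ n - T = 1 := by omega
      have := Nat.dvd_sub h1 h2
      rwa [h4] at this
    exact Nat.dvd_one.mp h3
  have hcop_q2T : Nat.Coprime (q ^ 2) T := Nat.Coprime.pow_left 2 hcop_qT
  have hd_s₀ : (d : ℤ) ∣ s₀ := by
    have := Int.gcd_dvd_left (a := s₀) (b := (q : ℤ) ^ n - 1)
    rwa [hgcd] at this
  obtain ⟨s₀', hs₀'⟩ := hd_s₀
  -- ## characteristic
  obtain ⟨p, k, hpp, hkpos, hpk⟩ := hq
  have hp : p.Prime := Nat.prime_iff.mpr hpp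
  haveI : Fact p.Prime := ⟨hp⟩
  have hcharF : CharP F p := by
    obtain ⟨p', hp'⟩ := CharP.exists F
    haveI := hp'
    obtain ⟨m', hp'prime, hcard'⟩ := FiniteField.card F p'
    have hpdvd : p ∣ p' ^ (m' : ℕ) := by
      rw [← hcard', hF, ← hpk]
      exact dvd_pow (dvd_pow_self p (by omega)) (by omega)
    have : p ∣ p' := hp.dvd_of_dvd_pow hpdvd
    have hpp' : p = p' := (Nat.prime_dvd_prime_iff_eq hp hp'prime).mp this
    rwa [hpp']
  haveI := hcharF
  haveI : ExpChar F p := expChar_prime F p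
  have hcard : Fintype.card F = p ^ (k * n) := by rw [hF, ← hpk, pow_mul]
  -- Frobenius additivity
  have hfrobP_add : ∀ (t : ℕ) (x y : F), (x + y) ^ p ^ t = x ^ p ^ t + y ^ p ^ t := by
    intro t x y
    have := map_add (iterateFrobenius F p t) x y
    simpa only [iterateFrobenius_def] using this
  have hfrobP_sub : ∀ (t : ℕ) (x y : F), (x - y) ^ p ^ t = x ^ p ^ t - y ^ p ^ t := by
    intro t x y
    have := map_sub (iterateFrobenius F p t) x y
    simpa only [iterateFrobenius_def] using this
  have hfrob_add : ∀ (r : ℕ) (x y : F), (x + y) ^ q ^ r = x ^ q ^ r + y ^ q ^ r := by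
    intro r x y
    have hqr : q ^ r = p ^ (k * r) := by rw [← hpk, ← pow_mul]
    rw [hqr]
    exact hfrobP_add (k * r) x y
  have hfrob_sub : ∀ (r : ℕ) (x y : F), (x - y) ^ q ^ r = x ^ q ^ r - y ^ q ^ r := by
    intro r x y
    have hqr : q ^ r = p ^ (k * r) := by rw [← hpk, ← pow_mul]
    rw [hqr]
    exact hfrobP_sub (k * r) x y
  -- x ^ (q^n) = x
  have hpow_card : ∀ x : F, x ^ q ^ n = x := by
    intro x
    have := FiniteField.pow_card x (K := F)
    rwa [hF] at this
  have hpow_T : ∀ x : F, x ≠ 0 → x ^ T = 1 := by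
    intro x hx
    have := FiniteField.pow_card_sub_one_eq_one x hx (K := F)
    rwa [hF] at this
  -- ## the trace
  set Tr : F → F := fun x => ∑ j ∈ range (k * n), x ^ p ^ j with hTr_def
  have htr_add : ∀ x y : F, Tr (x + y) = Tr x + Tr y := by
    intro x y
    rw [hTr_def]
    simp only
    rw [← Finset.sum_add_distrib]
    exact Finset.sum_congr rfl fun j _ => hfrobP_add j x y
  have htr_sub : ∀ x y : F, Tr (x - y) = Tr x - Tr y := by
    intro x y
    rw [hTr_def]
    simp only
    rw [← Finset.sum_sub_distrib]
    exact Finset.sum_congr rfl fun j _ => hfrobP_sub j x y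
  have hTrH : ∃ TrH : F →+ F, ∀ x, TrH x = Tr x := by
    refine ⟨AddMonoidHom.mk' Tr htr_add, fun x => rfl⟩
  obtain ⟨TrH, hTrH⟩ := hTrH
  have hxpm : ∀ x : F, x ^ p ^ (k * n) = x := by
    intro x
    have := FiniteField.pow_card x (K := F)
    rwa [hcard] at this
  -- obtain the trace
  obtain ⟨Tr, hTr_def, hTr_iter, hTr_ex⟩ :=
    aux_trace F p (k * n) (by positivity) hcard
  have htr_q : ∀ (i : ℕ) (x : F), Tr (x ^ q ^ i) = Tr x := by
    intro i x
    have hqr : q ^ i = p ^ (k * i) := by rw [← hpk, ← pow_mul]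
    rw [hqr]
    exact hTr_iter (k * i) x
  -- adjoint identity
  have hadj : ∀ y x : F, Tr (ℓ' y * x) = Tr (y * ℓ x) := by
    intro y x
    rw [hℓ' y, hℓ x, Finset.sum_mul, Finset.mul_sum, map_sum, map_sum]
    apply Finset.sum_congr rfl
    intro i hi
    have hin : i ≤ n := le_of_lt (Finset.mem_range.mp hi)
    have h1 : Tr ((b i * y) ^ q ^ (n - i) * x)
        = Tr (((b i * y) ^ q ^ (n - i) * x) ^ q ^ i) := (htr_q i _).symm
    rw [h1]
    have h2 : ((b i * y) ^ q ^ (n - i) * x) ^ q ^ i = (b i * y) * x ^ q ^ i := by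
      rw [mul_pow, ← pow_mul, ← pow_add, Nat.sub_add_cancel hin, hpow_card]
    rw [h2]
    congr 1
    ring
  -- e is odd
  have hcast2 : ∀ t : ℕ, Odd t → ((t : ℕ) : ZMod 2) = 1 := by
    intro t ht
    obtain ⟨j, hj⟩ := ht
    rw [hj]
    push_cast
    have h2 : (2 : ZMod 2) = 0 := rfl
    rw [h2]
    ring
  have he_odd : Odd e := by
    have h2 : ((e : ℕ) : ZMod 2) = 1 := by
      rw [he_def]
      push_cast
      have h3 : ∀ i ∈ range n, ((q : ZMod 2)) ^ i = 1 := by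
        intro i _
        rw [hcast2 q hqodd, one_pow]
      rw [Finset.sum_congr rfl h3, Finset.sum_const, Finset.card_range, nsmul_eq_mul, mul_one]
      exact hcast2 n ⟨m, hm⟩
    rw [Nat.odd_iff]
    by_contra hne
    have h4 : 2 ∣ e := by omega
    rw [(ZMod.natCast_eq_zero_iff e 2).mpr h4] at h2
    exact zero_ne_one h2
  -- A-injectivity
  have hAinj : ∀ v w : F, α * v + β * v ^ (q ^ 2) = α * w + β * w ^ (q ^ 2) → v = w := by
    intro v w hvw
    by_contra hne
    have hδ : v - w ≠ 0 := sub_ne_zero.mpr hne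
    have hδq : α * (v - w) + β * (v - w) ^ (q ^ 2) = 0 := by
      rw [hfrob_sub 2 v w]
      linear_combination hvw
    by_cases hβ : β = 0
    · have hα : α = 0 := by
        rw [hβ, zero_mul, add_zero] at hδq
        rcases mul_eq_zero.mp hδq with h' | h'
        · exact h'
        · exact absurd h' hδ
      apply hαβ
      have hz1 : ∏ i ∈ range n, α ^ q ^ i = 0 :=
        Finset.prod_eq_zero (Finset.mem_range.mpr hnpos)
          (by rw [hα]; exact zero_pow (by positivity))
      have hz2 : ∏ i ∈ range n, β ^ q ^ i = 0 :=
        Finset.prod_eq_zero (Finset.mem_range.mpr hnpos)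
          (by rw [hβ]; exact zero_pow (by positivity))
      rw [hz1, hz2, add_zero]
    · have h1 : β * (v - w) ^ (q ^ 2) = -(α * (v - w)) := by linear_combination hδq
      have h2 : (β * (v - w) ^ (q ^ 2)) ^ e = (-(α * (v - w))) ^ e := by rw [h1]
      have h3 : (-(α * (v - w))) ^ e = -(α ^ e * (v - w) ^ e) := by
        rw [neg_pow, he_odd.neg_one_pow, mul_pow]
        ring
      have h4 : (β * (v - w) ^ (q ^ 2)) ^ e = β ^ e * (v - w) ^ e := by
        rw [mul_pow, ← pow_mul]
        have h5 : q ^ 2 * e = e + (q + 1) * T := by rw [mul_comm]; exact keyC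
        rw [h5, pow_add, mul_comm (q + 1) T, pow_mul, hpow_T _ hδ, one_pow, mul_one]
      have h6 : (α ^ e + β ^ e) * (v - w) ^ e = 0 := by
        rw [h4, h3] at h2
        linear_combination h2
      have h7 : α ^ e + β ^ e = 0 := by
        rcases mul_eq_zero.mp h6 with h' | h'
        · exact h'
        · exact absurd h' (pow_ne_zero e hδ)
      apply hαβ
      rw [Finset.prod_pow_eq_pow_sum, Finset.prod_pow_eq_pow_sum]
      rw [he_def] at h7
      exact h7
  -- units generalities
  have hcardU : Fintype.card Fˣ = T := by rw [Fintype.card_units, hF]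
  have hu_T : ∀ u : Fˣ, u ^ T = 1 := fun u => by rw [← hcardU]; exact pow_card_eq_one
  -- ## main injectivity argument
  rw [← Finite.injective_iff_bijective]
  intro x₁ x₂ hg
  simp only at hg
  have hℓ0 : ℓ 0 = 0 := by
    rw [hℓ]
    apply Finset.sum_eq_zero
    intro i _
    rw [zero_pow (by positivity : q ^ i ≠ 0), mul_zero]
  have hℓne : ∀ x : F, x ≠ 0 → ℓ x ≠ 0 := by
    intro x hx hc
    exact hx (hℓbij.1 (hc.trans hℓ0.symm))
  by_cases hx₁ : x₁ = 0
  · by_cases hx₂ : x₂ = 0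
    · rw [hx₁, hx₂]
    · exfalso
      rw [hx₁, hℓ0, zero_mul] at hg
      exact (mul_ne_zero (hℓne x₂ hx₂)
        (pow_ne_zero _ (inv_ne_zero hx₂))) hg.symm
  by_cases hx₂ : x₂ = 0
  · exfalso
    rw [hx₂, hℓ0, zero_mul] at hg
    exact (mul_ne_zero (hℓne x₁ hx₁) (pow_ne_zero _ (inv_ne_zero hx₁))) hg
  -- both nonzero
  set τ : F := x₂ * x₁⁻¹ with hτ_def
  have hτ0 : τ ≠ 0 := mul_ne_zero hx₂ (inv_ne_zero hx₁)
  have hτx : τ * x₁ = x₂ := by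
    rw [hτ_def]
    field_simp
  suffices hτ1 : τ = 1 by rw [← hτx, hτ1, one_mul]
  have hcol : ℓ (τ * x₁) = τ ^ (q + 1) * ℓ x₁ := by
    rw [hτx]
    calc ℓ x₂ = ℓ x₂ * ((x₂⁻¹) ^ (q + 1) * x₂ ^ (q + 1)) := by
          rw [← mul_pow, inv_mul_cancel₀ hx₂, one_pow, mul_one]
      _ = ℓ x₂ * (x₂⁻¹) ^ (q + 1) * x₂ ^ (q + 1) := by ring
      _ = ℓ x₁ * (x₁⁻¹) ^ (q + 1) * x₂ ^ (q + 1) := by rw [← hg]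
      _ = τ ^ (q + 1) * ℓ x₁ := by rw [hτ_def, mul_pow]; ring
  set u : F := τ ^ (q + 1) with hu_def
  have hu0 : u ≠ 0 := pow_ne_zero _ hτ0
  have hℓ'sub : ∀ x y : F, ℓ' (x - y) = ℓ' x - ℓ' y := by
    intro x y
    rw [hℓ', hℓ', hℓ', ← Finset.sum_sub_distrib]
    apply Finset.sum_congr rfl
    intro i _
    rw [mul_sub, hfrob_sub]
  -- the adjoint/kernel step
  obtain ⟨z₀, hz₀ne, hz₀⟩ : ∃ z₀ : F, z₀ ≠ 0 ∧ ℓ' (u * z₀) = τ * ℓ' z₀ := by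
    by_contra hcon
    push_neg at hcon
    set M : F → F := fun z => ℓ' (u * z) - τ * ℓ' z with hM_def
    have hMz : ∀ z, M z = 0 → z = 0 := by
      intro z hz
      by_contra hzne
      exact hcon z hzne (sub_eq_zero.mp hz)
    have hMinj : Function.Injective M := by
      intro a a' haa
      have h1 : M (a - a') = 0 := by
        show ℓ' (u * (a - a')) - τ * ℓ' (a - a') = 0
        have e1 : u * (a - a') = u * a - u * a' := by ring
        rw [e1, hℓ'sub, hℓ'sub]
        have haa' : ℓ' (u * a) - τ * ℓ' a = ℓ' (u * a') - τ * ℓ' a' := haa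
        linear_combination haa'
      exact sub_eq_zero.mp (hMz _ h1)
    have hMsurj := Finite.injective_iff_surjective.mp hMinj
    obtain ⟨x₀, hx₀⟩ := hTr_ex
    obtain ⟨zs, hzs⟩ := hMsurj (x₀ * x₁⁻¹)
    have hTrz : Tr (M zs * x₁) = Tr x₀ := by
      rw [hzs]
      congr 1
      field_simp
    have hTr0 : Tr (M zs * x₁) = 0 := by
      have e1 : M zs * x₁ = ℓ' (u * zs) * x₁ - ℓ' zs * (τ * x₁) := by
        show (ℓ' (u * zs) - τ * ℓ' zs) * x₁ = _
        ring
      rw [e1, map_sub, hadj (u * zs) x₁, hadj zs (τ * x₁), hcol]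
      have e2 : u * zs * ℓ x₁ = zs * (τ ^ (q + 1) * ℓ x₁) := by rw [← hu_def]; ring
      rw [e2, sub_self]
    exact hx₀ (hTrz.symm.trans hTr0)
  set w₀ : F := u * z₀ with hw₀_def
  have hw₀ne : w₀ ≠ 0 := mul_ne_zero hu0 hz₀ne
  set ν : F := τ ^ e with hν_def
  have hν0 : ν ≠ 0 := pow_ne_zero _ hτ0
  have hΘ : w₀ ^ s * (ℓ' w₀) ^ q = ν * (z₀ ^ s * (ℓ' z₀) ^ q) := by
    rw [hw₀_def, hz₀, mul_pow, mul_pow, hu_def, ← pow_mul]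
    have e3 : τ ^ ((q + 1) * s) * z₀ ^ s * (τ ^ q * (ℓ' z₀) ^ q)
        = τ ^ ((q + 1) * s + q) * (z₀ ^ s * (ℓ' z₀) ^ q) := by
      rw [pow_add]; ring
    rw [e3, keyA, pow_add, hpow_T τ hτ0, mul_one, hν_def]
  have hqZne : ((q : ℤ)) ^ 2 ≠ 0 := pow_ne_zero 2 (by exact_mod_cast (by omega : q ≠ 0))
  have hs₀q2ne : s₀ * (q : ℤ) ^ 2 ≠ 0 := mul_ne_zero hs₀ne hqZne
  have hzpow_split : ∀ a : F, a ^ (s₀ * (q : ℤ) ^ 2) = (a ^ s₀) ^ (q ^ 2 : ℕ) := by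
    intro a
    by_cases ha : a = 0
    · rw [ha, zero_zpow _ hs₀q2ne, zero_zpow _ hs₀ne,
        zero_pow (by positivity : (q ^ 2 : ℕ) ≠ 0)]
    · set au := Units.mk0 a ha with hau
      have h2 : ∀ t : ℤ, a ^ t = ((au ^ t : Fˣ) : F) := fun t => by
        rw [Units.val_zpow_eq_zpow_val, hau, Units.val_mk0]
      rw [h2 (s₀ * (q : ℤ) ^ 2), zpow_mul au s₀ ((q : ℤ) ^ 2)]
      rw [Units.val_zpow_eq_zpow_val, ← h2 s₀]
      rw [← zpow_natCast (a ^ s₀) (q ^ 2)]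
      congr 1
  have hA : ∀ y : F, y ^ s * (ℓ' y) ^ q
      = α * (h y ^ s₀) + β * ((h y ^ s₀) ^ (q ^ 2 : ℕ)) := by
    intro y
    rw [heq y, hzpow_split]
  have hν_q2 : ν ^ (q ^ 2 : ℕ) = ν := by
    rw [hν_def, ← pow_mul, keyC, pow_add, mul_comm (q + 1) T, pow_mul,
      hpow_T τ hτ0, one_pow, mul_one]
  have hscale : ∀ (μ y cc : F), μ ^ q = μ → cc ^ (q ^ 2 : ℕ) = cc → μ ^ (q + s) = cc →
      h (μ * y) ^ s₀ = cc * (h y ^ s₀) := by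
    intro μ y cc hμq hccq hμqs
    have hμpow : ∀ j : ℕ, μ ^ q ^ j = μ := by
      intro j
      induction j with
      | zero => rw [pow_zero, pow_one]
      | succ j ih => rw [pow_succ, pow_mul, ih, hμq]
    have hℓ'μ : ℓ' (μ * y) = μ * ℓ' y := by
      rw [hℓ', hℓ', Finset.mul_sum]
      apply Finset.sum_congr rfl
      intro i _
      have e4 : b i * (μ * y) = μ * (b i * y) := by ring
      rw [e4, mul_pow, hμpow]
    apply hAinj
    rw [← hA (μ * y)]
    have e5 : (μ * y) ^ s * (ℓ' (μ * y)) ^ q = μ ^ (q + s) * (y ^ s * (ℓ' y) ^ q) := by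
      rw [hℓ'μ, mul_pow, mul_pow, pow_add]
      ring
    rw [e5, hμqs, hA y, mul_pow, hccq]
    ring
  have hhw₀ : h w₀ ≠ 0 := fun hc => hw₀ne (hbij.1 (hc.trans h0.symm))
  have hhz₀ : h z₀ ≠ 0 := fun hc => hz₀ne (hbij.1 (hc.trans h0.symm))
  have hHw : h w₀ ^ s₀ = ν * (h z₀ ^ s₀) := by
    apply hAinj
    rw [← hA w₀, hΘ, hA z₀, mul_pow, hν_q2]
    ring
  -- units : ν is in the image subgroup
  set τu : Fˣ := Units.mk0 τ hτ0 with hτu_def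
  set hwu : Fˣ := Units.mk0 (h w₀) hhw₀ with hhwu_def
  set hzu : Fˣ := Units.mk0 (h z₀) hhz₀ with hhzu_def
  have hρ : (hwu * hzu⁻¹) ^ s₀ = τu ^ e := by
    apply Units.ext
    rw [Units.val_zpow_eq_zpow_val, Units.val_mul, Units.val_pow_eq_pow_val]
    show ((h w₀) * ((hzu⁻¹ : Fˣ) : F)) ^ s₀ = τ ^ e
    have hinv : ((hzu⁻¹ : Fˣ) : F) = (h z₀)⁻¹ := by
      rw [hhzu_def]
      simp
    rw [hinv, mul_zpow, inv_zpow, hHw, hν_def]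
    rw [mul_assoc, mul_inv_cancel₀ (zpow_ne_zero _ hhz₀), mul_one]
  have hνuT : (τu ^ e) ^ (T / d) = 1 := by
    rw [← hρ, ← zpow_natCast ((hwu * hzu⁻¹) ^ s₀) (T / d), ← zpow_mul]
    have hdd : ((d : ℕ) : ℤ) * ((T / d : ℕ) : ℤ) = ((T : ℕ) : ℤ) := by exact_mod_cast hdTT
    have hexp : s₀ * ((T / d : ℕ) : ℤ) = s₀' * (T : ℤ) := by
      rw [hs₀']
      linear_combination s₀' * hdd
    rw [hexp, zpow_mul, zpow_natCast, hu_T]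
  have hνu_q1 : (τu ^ e) ^ (q - 1) = 1 := by
    rw [← pow_mul, keyD]
    exact hu_T τu
  have hν_small : (τu ^ e) ^ c = 1 := by
    have := aux_pow_gcd (τu ^ e) (q - 1) (T / d) hνu_q1 hνuT
    rwa [hgcd_q1_Td] at this
  obtain ⟨γ, hγ⟩ := IsCyclic.exists_generator (α := Fˣ)
  have hγord : orderOf γ = T := by
    rw [orderOf_eq_card_of_forall_mem_zpowers hγ, Nat.card_eq_fintype_card, hcardU]
  obtain ⟨a, ha⟩ := Subgroup.mem_zpowers_iff.mp (hγ (τu ^ e))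
  have hdvd1 : (T : ℤ) ∣ a * (c : ℤ) := by
    have h8 : γ ^ (a * (c : ℤ)) = 1 := by
      rw [zpow_mul, ha, zpow_natCast, hν_small]
    have := orderOf_dvd_iff_zpow_eq_one.mpr h8
    rwa [hγord] at this
  have hcpos : 0 < c := Nat.div_pos (Nat.le_of_dvd (by omega) hdq1) hdpos
  obtain ⟨a', ha'⟩ : ((e * d : ℕ) : ℤ) ∣ a := by
    have hedc : e * d * c = T := by rw [mul_assoc, ← hc1]; exact keyD
    have hTfact : (T : ℤ) = ((e * d : ℕ) : ℤ) * (c : ℤ) := by exact_mod_cast hedc.symm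
    have h9 : ((e * d : ℕ) : ℤ) * (c : ℤ) ∣ a * (c : ℤ) := hTfact ▸ hdvd1
    have hcne : (c : ℤ) ≠ 0 := by exact_mod_cast hcpos.ne'
    exact (mul_dvd_mul_iff_right hcne).mp h9
  have hbez := Nat.gcd_eq_gcd_ab (q + s) (q - 1)
  set X : ℤ := Nat.gcdA (q + s) (q - 1) with hX_def
  set Y : ℤ := Nat.gcdB (q + s) (q - 1) with hY_def
  have hbez' : (d : ℤ) = ((q + s : ℕ) : ℤ) * X + ((q - 1 : ℕ) : ℤ) * Y := by
    rw [← hgcd_qs_q1]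
    exact_mod_cast hbez
  set μ₁u : Fˣ := γ ^ ((e : ℤ) * X * a') with hμ₁u_def
  have hk1 : (e : ℤ) * ((q - 1 : ℕ) : ℤ) = (T : ℤ) := by exact_mod_cast keyD
  have hμ₁_q1 : μ₁u ^ (q - 1) = 1 := by
    rw [hμ₁u_def, ← zpow_natCast, ← zpow_mul]
    have hTZ' : ((e : ℤ) * X * a') * ((q - 1 : ℕ) : ℤ) = (T : ℤ) * (X * a') := by
      linear_combination (X * a') * hk1
    rw [hTZ', zpow_mul, zpow_natCast, hu_T γ, one_zpow]
  have hμ₁_qs : μ₁u ^ (q + s) = τu ^ e := by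
    rw [hμ₁u_def, ← zpow_natCast, ← zpow_mul, ← ha]
    have hk2 : a = ((e * d : ℕ) : ℤ) * a' := ha'
    have hkey : ((e : ℤ) * X * a') * ((q + s : ℕ) : ℤ) = a + (T : ℤ) * (-(a' * Y)) := by
      push_cast at hk2
      linear_combination (-(e : ℤ) * a') * hbez' + (-(a' * Y)) * hk1 + (-1 : ℤ) * hk2
    rw [hkey, zpow_add, zpow_mul, zpow_natCast, hu_T γ, one_zpow, mul_one]
  set μ₁ : F := ((μ₁u : Fˣ) : F) with hμ₁_def
  have hμ₁ne : μ₁ ≠ 0 := Units.ne_zero μ₁u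
  have hμ₁q1F : μ₁ ^ (q - 1) = 1 := by
    rw [hμ₁_def, ← Units.val_pow_eq_pow_val, hμ₁_q1, Units.val_one]
  have hμ₁q : μ₁ ^ q = μ₁ := by
    have hq' : q = (q - 1) + 1 := by omega
    rw [hq', pow_succ, hμ₁q1F, one_mul]
  have hμ₁qs : μ₁ ^ (q + s) = ν := by
    rw [hμ₁_def, ← Units.val_pow_eq_pow_val, hμ₁_qs, Units.val_pow_eq_pow_val]
    rw [hτu_def, Units.val_mk0, hν_def]
  set cH : F := h w₀ ^ s₀ with hcH_def
  have hcHne : cH ≠ 0 := zpow_ne_zero _ hhw₀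
  have hHμ₁ : h (μ₁ * z₀) ^ s₀ = cH := by
    rw [hHw]
    exact hscale μ₁ z₀ ν hμ₁q hν_q2 hμ₁qs
  set Kf : Finset F := Finset.univ.filter (fun μ : F => μ ^ d = 1) with hKf_def
  set fib : Finset F := Finset.univ.filter (fun y : F => h y ^ s₀ = cH) with hfib_def
  have hKf_mem : ∀ μ : F, μ ∈ Kf ↔ μ ^ d = 1 := by
    intro μ
    rw [hKf_def]
    simp
  have hfib_mem : ∀ y : F, y ∈ fib ↔ h y ^ s₀ = cH := by
    intro y
    rw [hfib_def]
    simp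
  have hzd : ∀ ρ : F, ρ ^ s₀ = 1 ↔ ρ ^ d = 1 := by
    intro ρ
    constructor
    · intro hρ1
      have hρne : ρ ≠ 0 := by
        intro h0''
        rw [h0'', zero_zpow _ hs₀ne] at hρ1
        exact zero_ne_one hρ1
      set ρu := Units.mk0 ρ hρne with hρu_def
      have hρuv : ∀ t : ℤ, ((ρu ^ t : Fˣ) : F) = ρ ^ t := fun t => by
        rw [Units.val_zpow_eq_zpow_val, hρu_def, Units.val_mk0]
      have hρu1 : ρu ^ s₀ = 1 := Units.ext (by rw [hρuv, Units.val_one]; exact hρ1)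
      have hρuT : ρu ^ ((q : ℤ) ^ n - 1) = 1 := by
        rw [← hTZ, zpow_natCast]
        exact hu_T ρu
      have hgot := aux_zpow_gcd ρu s₀ ((q : ℤ) ^ n - 1) hρu1 hρuT
      rw [hgcd] at hgot
      have hgot2 : ρu ^ (d : ℕ) = 1 := by
        rw [← zpow_natCast]
        exact hgot
      have := congrArg (Units.val) hgot2
      rw [Units.val_pow_eq_pow_val, Units.val_one, hρu_def, Units.val_mk0] at this
      exact this
    · intro hρd
      have hρne : ρ ≠ 0 := by
        intro h0''
        rw [h0'', zero_pow hdpos.ne'] at hρd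
        exact zero_ne_one hρd
      set ρu := Units.mk0 ρ hρne with hρu_def
      have hρu1 : ρu ^ (d : ℤ) = 1 := by
        apply Units.ext
        rw [Units.val_zpow_eq_zpow_val, zpow_natCast, Units.val_one, hρu_def, Units.val_mk0]
        exact hρd
      have hgot : ρu ^ s₀ = 1 := by
        rw [hs₀', zpow_mul, hρu1, one_zpow]
      have := congrArg (Units.val) hgot
      rw [Units.val_zpow_eq_zpow_val, Units.val_one, hρu_def, Units.val_mk0] at this
      exact this
  -- the two injections
  have hmap2 : ∀ μ ∈ Kf, μ * (μ₁ * z₀) ∈ fib := by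
    intro μ hμ
    rw [hfib_mem]
    have hμd := (hKf_mem μ).mp hμ
    have hμq1 : μ ^ (q - 1) = 1 := by
      obtain ⟨t, ht⟩ := hdq1
      rw [ht, pow_mul, hμd, one_pow]
    have hμq : μ ^ q = μ := by
      have hq' : q = (q - 1) + 1 := by omega
      rw [hq', pow_succ, hμq1, one_mul]
    have hμqs : μ ^ (q + s) = 1 := by
      obtain ⟨t, ht⟩ := hdqs
      rw [ht, pow_mul, hμd, one_pow]
    have := hscale μ (μ₁ * z₀) 1 hμq (one_pow _) hμqs
    rw [this, one_mul]
    exact hHμ₁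
  have hinj2 : ∀ a₁ ∈ Kf, ∀ a₂ ∈ Kf, a₁ * (μ₁ * z₀) = a₂ * (μ₁ * z₀) → a₁ = a₂ :=
    fun a₁ _ a₂ _ he' => mul_right_cancel₀ (mul_ne_zero hμ₁ne hz₀ne) he'
  have hcard1 : fib.card ≤ Kf.card := by
    apply Finset.card_le_card_of_injOn (fun y => h y * (h w₀)⁻¹)
    · intro y hy
      simp only [Finset.mem_coe]
      rw [hKf_mem, ← hzd]
      have hyfib := (hfib_mem y).mp hy
      have hhy : h y ≠ 0 := by
        intro h0''
        rw [h0'', zero_zpow _ hs₀ne] at hyfib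
        exact hcHne hyfib.symm
      rw [mul_zpow, inv_zpow, hyfib]
      rw [show (h w₀) ^ s₀ = cH from rfl]
      exact mul_inv_cancel₀ hcHne
    · intro y1 h1 y2 h2 heq'
      simp only at heq'
      have : h y1 = h y2 := mul_right_cancel₀ (inv_ne_zero hhw₀) heq'
      exact hbij.1 this
  have hcard2 : Kf.card ≤ fib.card := by
    apply Finset.card_le_card_of_injOn (fun μ => μ * (μ₁ * z₀))
    · exact hmap2
    · intro a₁ h1 a₂ h2 he'
      exact hinj2 a₁ h1 a₂ h2 he'
  have hw₀fib : w₀ ∈ fib := by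
    rw [hfib_mem]
  obtain ⟨μ, hμK, hμeq⟩ : ∃ μ, ∃ _ : μ ∈ Kf, w₀ = μ * (μ₁ * z₀) := by
    have hsurj := Finset.surj_on_of_inj_on_of_card_le (s := Kf) (t := fib)
      (fun μ _ => μ * (μ₁ * z₀)) (fun μ hμ => hmap2 μ hμ)
      (fun a₁ a₂ h1 h2 he' => hinj2 a₁ h1 a₂ h2 he') hcard1
    exact hsurj w₀ hw₀fib
  have hμd := (hKf_mem μ).mp hμK
  have hμqs2 : μ ^ (q + s) = 1 := by
    obtain ⟨t, ht⟩ := hdqs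
    rw [ht, pow_mul, hμd, one_pow]
  have hτμ : τ ^ (q + 1) = μ * μ₁ := by
    have h10 : u * z₀ = (μ * μ₁) * z₀ := by
      rw [← hw₀_def, hμeq]
      ring
    have h11 := mul_right_cancel₀ hz₀ne h10
    rw [hu_def] at h11
    exact h11
  have hfinal : τ ^ ((q + 1) * (q + s)) = ν := by
    rw [pow_mul, hτμ, mul_pow, hμqs2, one_mul, hμ₁qs]
  have hfinal2 : τ ^ (q ^ 2) * ν = ν := by
    have h11 : τ ^ ((q + 1) * (q + s)) = τ ^ (q ^ 2) * ν := by
      rw [keyB, pow_add, pow_add, hpow_T τ hτ0, mul_one, hν_def]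
    rw [← h11, hfinal]
  have hτq2 : τ ^ (q ^ 2 : ℕ) = 1 := by
    have h12 : τ ^ (q ^ 2) * ν = 1 * ν := by rw [hfinal2, one_mul]
    exact mul_right_cancel₀ hν0 h12
  have hτuq2 : τu ^ (q ^ 2 : ℕ) = 1 := by
    apply Units.ext
    rw [Units.val_pow_eq_pow_val, Units.val_one, hτu_def, Units.val_mk0]
    exact hτq2
  have hgcdfin := aux_pow_gcd τu (q ^ 2) T hτuq2 (hu_T τu)
  rw [hcop_q2T, pow_one] at hgcdfin
  have : τ = 1 := by
    have := congrArg (Units.val) hgcdfin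
    rw [Units.val_one, hτu_def, Units.val_mk0] at this
    exact this
  exact this
end

section
/- Let q be an odd prime power and a ∈ F_{q^3} nonzero with N(a)^2 ≠ 1, where N(x) = x^{q^2+q+1} is the norm from F_{q^3} to F_q. Then both maps f : x ↦ (N(a)+1)·x^{q^2-q-1} + 2a^q·x^{-1} + 2a^{q+1}·x^{-q} and g : x ↦ (N(a)+1)·x^{q^2+q-1} + 2a·x^{q^2} + 2a^{q+1}·x^q are bijections of F_{q^3}, where x^{-1} denotes x^{q^3-2} (so 0 maps to 0) and x^{q^2-q-1} = x^{q^2}·x^{-(q+1)}. -/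
set_option maxHeartbeats 2000000 in
/-- For odd `q` and `a ≠ 0` with `N(a)^2 ≠ 1`, both
`x ↦ (N(a)+1)x^{q^2-q-1} + 2a^q x^{-1} + 2a^{q+1} x^{-q}` and
`x ↦ (N(a)+1)x^{q^2+q-1} + 2a x^{q^2} + 2a^{q+1} x^q` are bijections of `F_{q^3}`. -/
theorem stmt_17 (q : ℕ) (hq : IsPrimePow q) (hqodd : Odd q)
    (F : Type*) [Field F] [Fintype F] (hF : Fintype.card F = q ^ 3)
    (a : F) (ha : a ≠ 0) (hNa : (a ^ (q ^ 2 + q + 1)) ^ 2 ≠ 1) :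
    (Function.Bijective fun x : F =>
      (a ^ (q ^ 2 + q + 1) + 1) * (x ^ q ^ 2 * (x⁻¹) ^ (q + 1)) + 2 * a ^ q * x⁻¹
        + 2 * a ^ (q + 1) * (x⁻¹) ^ q) ∧
    (Function.Bijective fun x : F =>
      (a ^ (q ^ 2 + q + 1) + 1) * x ^ (q ^ 2 + q - 1) + 2 * a * x ^ q ^ 2
        + 2 * a ^ (q + 1) * x ^ q) := by
  classical
  obtain ⟨p, k, hpp, hk, hpk⟩ := hq
  have hp' : Nat.Prime p := Nat.prime_iff.mpr hpp
  have hq1 : 1 < q := by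
    rw [← hpk]; exact Nat.one_lt_pow (by omega) hp'.one_lt
  have hq3 : 3 ≤ q := by
    have h2 := Nat.odd_iff.mp hqodd
    omega
  have hq0 : q ≠ 0 := by omega
  have hq10 : q + 1 ≠ 0 := by omega
  have hq20 : q ^ 2 ≠ 0 := pow_ne_zero 2 hq0
  have hAq : q ≤ q ^ 2 := Nat.le_self_pow two_ne_zero q
  have hA2 : q + 1 ≤ q ^ 2 := by nlinarith
  have hposqq : 0 < q ^ 2 + q := by positivity
  have h1lt : 1 < q ^ 2 + q := by omega
  have hqe0 : q ^ 2 + q - 1 ≠ 0 := Nat.sub_ne_zero_of_lt h1lt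
  -- characteristic
  haveI hring := ringChar.charP F
  have hrp : (ringChar F).Prime := CharP.char_is_prime F (ringChar F)
  obtain ⟨nn, hpn, hcardp⟩ := FiniteField.card F (ringChar F)
  have hpq : p = ringChar F := by
    have h1 : p ∣ (ringChar F) ^ (nn : ℕ) := by
      rw [← hcardp, hF, ← hpk, ← pow_mul]
      exact dvd_pow_self p (by positivity)
    exact (Nat.prime_dvd_prime_iff_eq hp' hrp).mp (hp'.dvd_of_dvd_pow h1)
  haveI hcharF : CharP F p := hpq ▸ hring
  haveI : Fact p.Prime := ⟨hp'⟩
  have hadd : ∀ u v : F, (u + v) ^ q = u ^ q + v ^ q := by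
    intro u v; rw [← hpk]; exact add_pow_char_pow u v p k
  have hsub : ∀ u v : F, (u - v) ^ q = u ^ q - v ^ q := by
    intro u v; rw [← hpk]; exact sub_pow_char_pow u v k (p := p)
  have h2q : (2 : F) ^ q = 2 := by
    rw [show (2 : F) = 1 + 1 by norm_num, hadd, one_pow]
  have hQ3 : ∀ y : F, y ^ q ^ 3 = y := fun y => by rw [← hF]; exact FiniteField.pow_card y
  have hqq : q * q = q ^ 2 := (pow_two q).symm
  have hq23 : q ^ 2 * q = q ^ 3 := (pow_succ q 2).symm
  have hA : ∀ y : F, (y ^ q) ^ q = y ^ q ^ 2 := fun y => by rw [← pow_mul, hqq]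
  have hB : ∀ y : F, (y ^ q ^ 2) ^ q = y := fun y => by rw [← pow_mul, hq23]; exact hQ3 y
  -- order argument
  have hcancel : ∀ r : F, r ≠ 0 → ∀ e n : ℕ, r ^ (e + n) = r ^ n → r ^ e = 1 := by
    intro r hr e n hpw
    have hn := pow_ne_zero n hr
    apply mul_right_cancel₀ hn
    rw [← pow_add, hpw, one_mul]
  have hordone : ∀ r : F, r ≠ 0 → ∀ e : ℕ, r ^ e = 1 → Odd e →
      ∀ u v : ℤ, u * (e : ℤ) + v * ((q : ℤ) ^ 3 - 1) = 2 → r = 1 := by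
    intro r hr e he hodde u v hbez
    have h1 : orderOf r ∣ e := orderOf_dvd_of_pow_eq_one he
    have hc : r ^ (q ^ 3 - 1) = 1 := by
      have h := FiniteField.pow_card_sub_one_eq_one r hr
      rwa [hF] at h
    have h2 : orderOf r ∣ q ^ 3 - 1 := orderOf_dvd_of_pow_eq_one hc
    have hq31 : 1 ≤ q ^ 3 := Nat.one_le_iff_ne_zero.mpr (pow_ne_zero 3 hq0)
    have hcast : ((q ^ 3 - 1 : ℕ) : ℤ) = (q : ℤ) ^ 3 - 1 := by
      rw [Nat.cast_sub hq31]; push_cast; ring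
    have hdvd2 : (orderOf r : ℤ) ∣ 2 := by
      rw [← hbez]
      refine dvd_add (Dvd.dvd.mul_left ?_ u) (Dvd.dvd.mul_left ?_ v)
      · exact_mod_cast Int.natCast_dvd_natCast.mpr h1
      · rw [← hcast]; exact_mod_cast Int.natCast_dvd_natCast.mpr h2
    have hdvd2' : orderOf r ∣ 2 := by exact_mod_cast hdvd2
    have hnev : ¬ Even (orderOf r) := by
      intro hev
      obtain ⟨m, hm⟩ := hev
      obtain ⟨cdiv, hcd⟩ := h1
      have : Even e := ⟨m * cdiv, by rw [hcd, hm]; ring⟩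
      exact (Nat.not_even_iff_odd.mpr hodde) this
    rcases (Nat.dvd_prime Nat.prime_two).mp hdvd2' with h | h
    · exact orderOf_eq_one_iff.mp h
    · exact absurd (by rw [h]; exact even_two) hnev
  have odd1 : Odd (q ^ 2 + q - 1) :=
    Nat.Even.sub_odd hposqq (hqodd.pow.add_odd hqodd) odd_one
  have odd2 : Odd (q ^ 2 - q - 1) := by
    rw [Nat.sub_sub]; exact Nat.Odd.sub_even hA2 hqodd.pow (hqodd.add_one)
  have odd3 : Odd (q ^ 2 - q + 1) := Even.add_one (Nat.Odd.sub_odd hqodd.pow hqodd)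
  have c1 : ((q ^ 2 + q - 1 : ℕ) : ℤ) = (q : ℤ) ^ 2 + q - 1 := by
    rw [Nat.cast_sub hposqq]; push_cast; ring
  have c2 : ((q ^ 2 - q - 1 : ℕ) : ℤ) = (q : ℤ) ^ 2 - q - 1 := by
    rw [Nat.sub_sub, Nat.cast_sub hA2]; push_cast; ring
  have c3 : ((q ^ 2 - q + 1 : ℕ) : ℤ) = (q : ℤ) ^ 2 - q + 1 := by
    rw [Nat.cast_add, Nat.cast_sub hAq]; push_cast; ring
  have hrone : ∀ r : F, r ≠ 0 →
      (r - r ^ q * r ^ q ^ 2 = 0 ∨ r * r ^ q - r ^ q ^ 2 = 0 ∨ r * r ^ q ^ 2 - r ^ q = 0) →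
      r = 1 := by
    intro r hr hcase
    rcases hcase with hcc | hcc | hcc
    · have he : q ^ 2 + q - 1 + 1 = q ^ 2 + q := Nat.sub_add_cancel hposqq
      have hpw : r ^ (q ^ 2 + q - 1 + 1) = r ^ 1 := by
        rw [he, pow_add, pow_one]
        linear_combination -hcc
      exact hordone r hr _ (hcancel r hr _ 1 hpw) odd1 ((q : ℤ) ^ 2 + q) (-((q : ℤ) + 2))
        (by rw [c1]; ring)
    · have he : q ^ 2 - q - 1 + (q + 1) = q ^ 2 := by
        rw [Nat.sub_sub]; exact Nat.sub_add_cancel hA2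
      have hpw : r ^ (q ^ 2 - q - 1 + (q + 1)) = r ^ (q + 1) := by
        rw [he, pow_add, pow_one]
        linear_combination -hcc
      exact hordone r hr _ (hcancel r hr _ (q + 1) hpw) odd2 (-((q : ℤ) ^ 2 + 1)) ((q : ℤ) - 1)
        (by rw [c2]; ring)
    · have he : q ^ 2 - q + 1 + q = q ^ 2 + 1 := by
        rw [add_assoc, add_comm 1 q, ← add_assoc, Nat.sub_add_cancel hAq]
      have hpw : r ^ (q ^ 2 - q + 1 + q) = r ^ q := by
        rw [he, pow_add, pow_one]
        linear_combination hcc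
      exact hordone r hr _ (hcancel r hr _ q hpw) odd3 ((q : ℤ) + 1) (-1)
        (by rw [c3]; ring)
  -- norm nonvanishing
  have hNn : a ^ (q ^ 2 + q + 1) = a * a ^ q * a ^ q ^ 2 := by
    rw [pow_add, pow_add, pow_one]; ring
  have hn1 : a * a ^ q * a ^ q ^ 2 - 1 ≠ 0 := by
    intro hh
    apply hNa
    rw [hNn, sub_eq_zero.mp hh, one_pow]
  have hn2 : a * a ^ q * a ^ q ^ 2 + 1 ≠ 0 := by
    intro hh
    apply hNa
    have hm : a * a ^ q * a ^ q ^ 2 = -1 := by linear_combination hh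
    rw [hNn, hm, neg_one_sq]
  constructor
  · -- f part
    apply Finite.injective_iff_bijective.mp
    have hfmul : ∀ y : F, y ≠ 0 →
        ((a ^ (q ^ 2 + q + 1) + 1) * (y ^ q ^ 2 * (y⁻¹) ^ (q + 1)) + 2 * a ^ q * y⁻¹
          + 2 * a ^ (q + 1) * (y⁻¹) ^ q) * y ^ (q + 1)
        = (a * a ^ q * a ^ q ^ 2 + 1) * y ^ q ^ 2 + 2 * a ^ q * y ^ q + 2 * (a ^ q * a) * y := by
      intro y hy
      have t1 : (y⁻¹) ^ (q + 1) * y ^ (q + 1) = 1 := by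
        rw [← mul_pow, inv_mul_cancel₀ hy, one_pow]
      have t2 : y⁻¹ * y ^ (q + 1) = y ^ q := by
        rw [pow_succ', ← mul_assoc, inv_mul_cancel₀ hy, one_mul]
      have t3 : (y⁻¹) ^ q * y ^ (q + 1) = y := by
        rw [pow_succ, ← mul_assoc, ← mul_pow, inv_mul_cancel₀ hy, one_pow, one_mul]
      calc ((a ^ (q ^ 2 + q + 1) + 1) * (y ^ q ^ 2 * (y⁻¹) ^ (q + 1)) + 2 * a ^ q * y⁻¹
          + 2 * a ^ (q + 1) * (y⁻¹) ^ q) * y ^ (q + 1)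
          = (a ^ (q ^ 2 + q + 1) + 1) * y ^ q ^ 2 * ((y⁻¹) ^ (q + 1) * y ^ (q + 1))
            + 2 * a ^ q * (y⁻¹ * y ^ (q + 1)) + 2 * a ^ (q + 1) * ((y⁻¹) ^ q * y ^ (q + 1)) := by
            ring
        _ = (a * a ^ q * a ^ q ^ 2 + 1) * y ^ q ^ 2 + 2 * a ^ q * y ^ q + 2 * (a ^ q * a) * y := by
            rw [t1, t2, t3, hNn]; ring
    -- f sends only 0 to 0
    have hf0 : ∀ y : F, (a ^ (q ^ 2 + q + 1) + 1) * (y ^ q ^ 2 * (y⁻¹) ^ (q + 1))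
        + 2 * a ^ q * y⁻¹ + 2 * a ^ (q + 1) * (y⁻¹) ^ q = 0 → y = 0 := by
      intro y hy
      by_contra hy0
      have E1 : (a * a ^ q * a ^ q ^ 2 + 1) * y ^ q ^ 2 + 2 * a ^ q * y ^ q
          + 2 * (a ^ q * a) * y = 0 := by
        rw [← hfmul y hy0, hy, zero_mul]
      have E2 : (a * a ^ q * a ^ q ^ 2 + 1) * y + 2 * a ^ q ^ 2 * y ^ q ^ 2
          + 2 * (a ^ q ^ 2 * a ^ q) * y ^ q = 0 := by
        have h' := congrArg (fun t : F => t ^ q) E1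
        simp only [mul_pow, hadd, hsub, h2q, one_pow, hA, hB, zero_pow hq0] at h'
        linear_combination h'
      have E3 : (a * a ^ q * a ^ q ^ 2 + 1) * y ^ q + 2 * a * y
          + 2 * (a * a ^ q ^ 2) * y ^ q ^ 2 = 0 := by
        have h' := congrArg (fun t : F => t ^ q) E2
        simp only [mul_pow, hadd, hsub, h2q, one_pow, hA, hB, zero_pow hq0] at h'
        linear_combination h'
      have hD : ((a * a ^ q * a ^ q ^ 2 - 1) ^ 2 * ((a * a ^ q * a ^ q ^ 2 + 1))) * y = 0 := by
        linear_combination (2*a*(a^q)*(a^(q^2))^2 - 2*(a^(q^2))) * E1 + (a^2*(a^q)^2*(a^(q^2))^2 - 2*a*(a^q)*(a^(q^2)) + 1) * E2 + (-2*a*(a^q)^2*(a^(q^2))^2 + 2*(a^q)*(a^(q^2))) * E3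
      rcases mul_eq_zero.mp hD with h' | h'
      · rcases mul_eq_zero.mp h' with h'' | h''
        · exact hn1 (pow_eq_zero_iff two_ne_zero |>.mp h'')
        · exact hn2 h''
      · exact hy0 h'
    intro x z h
    dsimp only at h
    by_cases hx : x = 0
    · subst hx
      have hzero : (a ^ (q ^ 2 + q + 1) + 1) * ((0 : F) ^ q ^ 2 * ((0 : F)⁻¹) ^ (q + 1))
          + 2 * a ^ q * (0 : F)⁻¹ + 2 * a ^ (q + 1) * ((0 : F)⁻¹) ^ q = 0 := by
        simp [inv_zero, zero_pow hq0, zero_pow hq10, zero_pow hq20]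
      rw [hzero] at h
      exact (hf0 z h.symm).symm
    by_cases hz : z = 0
    · subst hz
      have hzero : (a ^ (q ^ 2 + q + 1) + 1) * ((0 : F) ^ q ^ 2 * ((0 : F)⁻¹) ^ (q + 1))
          + 2 * a ^ q * (0 : F)⁻¹ + 2 * a ^ (q + 1) * ((0 : F)⁻¹) ^ q = 0 := by
        simp [inv_zero, zero_pow hq0, zero_pow hq10, zero_pow hq20]
      rw [hzero] at h
      exact hf0 x h
    obtain ⟨r, hzr⟩ : ∃ r : F, z = r * x := ⟨z * x⁻¹, by field_simp⟩
    have hr0 : r ≠ 0 := fun hr => hz (by rw [hzr, hr, zero_mul])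
    subst hzr
    have hrx : r * x ≠ 0 := mul_ne_zero hr0 hx
    have hkey : ((a * a ^ q * a ^ q ^ 2 + 1) * x ^ q ^ 2 + 2 * a ^ q * x ^ q
          + 2 * (a ^ q * a) * x) * (r * x) ^ (q + 1)
        = ((a * a ^ q * a ^ q ^ 2 + 1) * (r * x) ^ q ^ 2 + 2 * a ^ q * (r * x) ^ q
          + 2 * (a ^ q * a) * (r * x)) * x ^ (q + 1) := by
      linear_combination (x ^ (q + 1) * (r * x) ^ (q + 1)) * h
        - (r * x) ^ (q + 1) * hfmul x hx + x ^ (q + 1) * hfmul (r * x) hrx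
    have E1 : (a * a ^ q * a ^ q ^ 2 + 1) * (r ^ q * r - r ^ q ^ 2) * x ^ q ^ 2
        + 2 * a ^ q * (r ^ q * r - r ^ q) * x ^ q
        + 2 * (a ^ q * a) * (r ^ q * r - r) * x = 0 := by
      apply mul_left_cancel₀ (mul_ne_zero (pow_ne_zero q hx) hx)
      rw [mul_zero]
      linear_combination hkey
    have E2 : (a * a ^ q * a ^ q ^ 2 + 1) * (r ^ q ^ 2 * r ^ q - r) * x
        + 2 * a ^ q ^ 2 * (r ^ q ^ 2 * r ^ q - r ^ q ^ 2) * x ^ q ^ 2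
        + 2 * (a ^ q ^ 2 * a ^ q) * (r ^ q ^ 2 * r ^ q - r ^ q) * x ^ q = 0 := by
      have h' := congrArg (fun t : F => t ^ q) E1
      simp only [mul_pow, hadd, hsub, h2q, one_pow, hA, hB, zero_pow hq0] at h'
      linear_combination h'
    have E3 : (a * a ^ q * a ^ q ^ 2 + 1) * (r * r ^ q ^ 2 - r ^ q) * x ^ q
        + 2 * a * (r * r ^ q ^ 2 - r) * x
        + 2 * (a * a ^ q ^ 2) * (r * r ^ q ^ 2 - r ^ q ^ 2) * x ^ q ^ 2 = 0 := by
      have h' := congrArg (fun t : F => t ^ q) E2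
      simp only [mul_pow, hadd, hsub, h2q, one_pow, hA, hB, zero_pow hq0] at h'
      linear_combination h'
    have hD : ((a * a ^ q * a ^ q ^ 2 - 1) ^ 2 * ((a * a ^ q * a ^ q ^ 2 + 1)
        * ((r - r ^ q * r ^ q ^ 2) * ((r * r ^ q - r ^ q ^ 2)
        * (r * r ^ q ^ 2 - r ^ q))))) * x = 0 := by
      linear_combination (-2*a*(a^q)*(a^(q^2))^2*r*(r^q)*(r^(q^2))^2 + 4*a*(a^q)*(a^(q^2))^2*r*(r^q)*(r^(q^2)) - 2*a*(a^q)*(a^(q^2))^2*r*(r^(q^2))^2 - 2*a*(a^q)*(a^(q^2))^2*(r^q)^2*(r^(q^2)) + 4*a*(a^q)*(a^(q^2))^2*(r^q)*(r^(q^2))^2 - 2*a*(a^q)*(a^(q^2))^2*(r^q)*(r^(q^2)) + 2*(a^(q^2))*r*(r^q)*(r^(q^2))^2 - 2*(a^(q^2))*r*(r^(q^2))^2 - 2*(a^(q^2))*(r^q)^2*(r^(q^2)) + 2*(a^(q^2))*(r^q)*(r^(q^2))) * E1 + (-a^2*(a^q)^2*(a^(q^2))^2*r^2*(r^q)*(r^(q^2))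 + a^2*(a^q)^2*(a^(q^2))^2*r*(r^q)^2 + a^2*(a^q)^2*(a^(q^2))^2*r*(r^(q^2))^2 - a^2*(a^q)^2*(a^(q^2))^2*(r^q)*(r^(q^2)) + 2*a*(a^q)*(a^(q^2))*r^2*(r^q)*(r^(q^2)) + 2*a*(a^q)*(a^(q^2))*r*(r^q)^2 - 8*a*(a^q)*(a^(q^2))*r*(r^q)*(r^(q^2)) + 2*a*(a^q)*(a^(q^2))*r*(r^(q^2))^2 + 2*a*(a^q)*(a^(q^2))*(r^q)*(r^(q^2)) - r^2*(r^q)*(r^(q^2)) + r*(r^q)^2 + r*(r^(q^2))^2 - (r^q)*(r^(q^2))) * E2 + (2*a*(a^q)^2*(a^(q^2))^2*r*(r^q)^2*(r^(q^2)) - 2*a*(a^q)^2*(a^(q^2))^2*r*(r^q)^2 - 2*a*(a^q)^2*(a^(q^2))^2*(r^q)*(r^(q^2))^2 + 2*a*(a^q)^2*(a^(q^2))^2*(r^q)*(r^(q^2)) - 2*(a^q)*(a^(q^2))*r*(r^q)^2*(r^(q^2)) - 2*(a^q)*(a^(q^2))*r*(r^q)^2 + 4*(a^q)*(a^(q^2))*r*(r^q)*(r^(q^2))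 + 4*(a^q)*(a^(q^2))*(r^q)^2*(r^(q^2)) - 2*(a^q)*(a^(q^2))*(r^q)*(r^(q^2))^2 - 2*(a^q)*(a^(q^2))*(r^q)*(r^(q^2))) * E3
    have hr1 : r = 1 := by
      rcases mul_eq_zero.mp hD with h' | h'
      · rcases mul_eq_zero.mp h' with h'' | h''
        · exact absurd (pow_eq_zero_iff two_ne_zero |>.mp h'') hn1
        rcases mul_eq_zero.mp h'' with h3 | h3
        · exact absurd h3 hn2
        rcases mul_eq_zero.mp h3 with h4 | h4
        · exact hrone r hr0 (Or.inl h4)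
        rcases mul_eq_zero.mp h4 with h5 | h5
        · exact hrone r hr0 (Or.inr (Or.inl h5))
        · exact hrone r hr0 (Or.inr (Or.inr h5))
      · exact absurd h' hx
    rw [hr1, one_mul]
  · -- g part
    apply Finite.injective_iff_bijective.mp
    have hpe : ∀ y : F, y ^ (q ^ 2 + q - 1) * y = y ^ q ^ 2 * y ^ q := by
      intro y
      rw [← pow_succ, Nat.sub_add_cancel hposqq, pow_add]
    have hgmul : ∀ y : F,
        ((a ^ (q ^ 2 + q + 1) + 1) * y ^ (q ^ 2 + q - 1) + 2 * a * y ^ q ^ 2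
          + 2 * a ^ (q + 1) * y ^ q) * y
        = (a * a ^ q * a ^ q ^ 2 + 1) * (y ^ q ^ 2 * y ^ q) + 2 * a * (y ^ q ^ 2 * y)
          + 2 * (a ^ q * a) * (y ^ q * y) := by
      intro y
      have h' := hpe y
      linear_combination ((a ^ (q ^ 2 + q + 1) + 1)) * h' + (y ^ q ^ 2 * y ^ q) * hNn
    have hg0 : ∀ y : F, (a ^ (q ^ 2 + q + 1) + 1) * y ^ (q ^ 2 + q - 1) + 2 * a * y ^ q ^ 2
        + 2 * a ^ (q + 1) * y ^ q = 0 → y = 0 := by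
      intro y hy
      have E1 : (a * a ^ q * a ^ q ^ 2 + 1) * (y ^ q ^ 2 * y ^ q) + 2 * a * (y ^ q ^ 2 * y)
          + 2 * (a ^ q * a) * (y ^ q * y) = 0 := by
        rw [← hgmul y, hy, zero_mul]
      have E2 : (a * a ^ q * a ^ q ^ 2 + 1) * (y * y ^ q ^ 2) + 2 * a ^ q * (y ^ q * y)
          + 2 * (a ^ q ^ 2 * a ^ q) * (y ^ q ^ 2 * y ^ q) = 0 := by
        have h' := congrArg (fun t : F => t ^ q) E1
        simp only [mul_pow, hadd, hsub, h2q, one_pow, hA, hB, zero_pow hq0] at h'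
        linear_combination h'
      have E3 : (a * a ^ q * a ^ q ^ 2 + 1) * (y ^ q * y) + 2 * a ^ q ^ 2 * (y ^ q ^ 2 * y ^ q)
          + 2 * (a * a ^ q ^ 2) * (y * y ^ q ^ 2) = 0 := by
        have h' := congrArg (fun t : F => t ^ q) E2
        simp only [mul_pow, hadd, hsub, h2q, one_pow, hA, hB, zero_pow hq0] at h'
        linear_combination h'
      have hD : ((a * a ^ q * a ^ q ^ 2 - 1) ^ 2 * ((a * a ^ q * a ^ q ^ 2 + 1)))
          * (y ^ q * y) = 0 := by
        linear_combination (2*a*(a^q)*(a^(q^2))^2 - 2*(a^(q^2))) * E1 + (-2*a^2*(a^q)*(a^(q^2))^2 + 2*a*(a^(q^2))) * E2 + (a^2*(a^q)^2*(a^(q^2))^2 - 2*a*(a^q)*(a^(q^2)) + 1) * E3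
      rcases mul_eq_zero.mp hD with h' | h'
      · rcases mul_eq_zero.mp h' with h'' | h''
        · exact absurd (pow_eq_zero_iff two_ne_zero |>.mp h'') hn1
        · exact absurd h'' hn2
      · rcases mul_eq_zero.mp h' with h'' | h''
        · exact pow_eq_zero_iff hq0 |>.mp h''
        · exact h''
    intro x z h
    dsimp only at h
    by_cases hx : x = 0
    · subst hx
      have hzero : (a ^ (q ^ 2 + q + 1) + 1) * (0 : F) ^ (q ^ 2 + q - 1) + 2 * a * (0 : F) ^ q ^ 2
          + 2 * a ^ (q + 1) * (0 : F) ^ q = 0 := by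
        simp [zero_pow hq0, zero_pow hq20, zero_pow hqe0]
      rw [hzero] at h
      exact (hg0 z h.symm).symm
    by_cases hz : z = 0
    · subst hz
      have hzero : (a ^ (q ^ 2 + q + 1) + 1) * (0 : F) ^ (q ^ 2 + q - 1) + 2 * a * (0 : F) ^ q ^ 2
          + 2 * a ^ (q + 1) * (0 : F) ^ q = 0 := by
        simp [zero_pow hq0, zero_pow hq20, zero_pow hqe0]
      rw [hzero] at h
      exact hg0 x h
    obtain ⟨r, hzr⟩ : ∃ r : F, z = r * x := ⟨z * x⁻¹, by field_simp⟩
    have hr0 : r ≠ 0 := fun hr => hz (by rw [hzr, hr, zero_mul])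
    subst hzr
    have hkey : ((a * a ^ q * a ^ q ^ 2 + 1) * (x ^ q ^ 2 * x ^ q) + 2 * a * (x ^ q ^ 2 * x)
          + 2 * (a ^ q * a) * (x ^ q * x)) * (r * x)
        = ((a * a ^ q * a ^ q ^ 2 + 1) * ((r * x) ^ q ^ 2 * (r * x) ^ q)
          + 2 * a * ((r * x) ^ q ^ 2 * (r * x))
          + 2 * (a ^ q * a) * ((r * x) ^ q * (r * x))) * x := by
      linear_combination (x * (r * x)) * h - (r * x) * hgmul x + x * hgmul (r * x)
    have E1 : (a * a ^ q * a ^ q ^ 2 + 1) * (r - r ^ q * r ^ q ^ 2) * (x ^ q ^ 2 * x ^ q)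
        + 2 * a * (r - r ^ q ^ 2 * r) * (x ^ q ^ 2 * x)
        + 2 * (a ^ q * a) * (r - r ^ q * r) * (x ^ q * x) = 0 := by
      apply mul_left_cancel₀ hx
      rw [mul_zero]
      linear_combination hkey
    have E2 : (a * a ^ q * a ^ q ^ 2 + 1) * (r ^ q - r ^ q ^ 2 * r) * (x ^ q ^ 2 * x)
        + 2 * a ^ q * (r ^ q - r * r ^ q) * (x ^ q * x)
        + 2 * (a ^ q ^ 2 * a ^ q) * (r ^ q - r ^ q * r ^ q ^ 2) * (x ^ q ^ 2 * x ^ q) = 0 := by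
      have h' := congrArg (fun t : F => t ^ q) E1
      simp only [mul_pow, hadd, hsub, h2q, one_pow, hA, hB, zero_pow hq0] at h'
      linear_combination h'
    have E3 : (a * a ^ q * a ^ q ^ 2 + 1) * (r ^ q ^ 2 - r * r ^ q) * (x ^ q * x)
        + 2 * a ^ q ^ 2 * (r ^ q ^ 2 - r ^ q * r ^ q ^ 2) * (x ^ q ^ 2 * x ^ q)
        + 2 * (a * a ^ q ^ 2) * (r ^ q ^ 2 - r ^ q ^ 2 * r) * (x ^ q ^ 2 * x) = 0 := by
      have h' := congrArg (fun t : F => t ^ q) E2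
      simp only [mul_pow, hadd, hsub, h2q, one_pow, hA, hB, zero_pow hq0] at h'
      linear_combination h'
    have hD : ((a * a ^ q * a ^ q ^ 2 - 1) ^ 2 * ((a * a ^ q * a ^ q ^ 2 + 1)
        * ((r - r ^ q * r ^ q ^ 2) * ((r ^ q - r ^ q ^ 2 * r)
        * (r ^ q ^ 2 - r * r ^ q))))) * (x ^ q * x) = 0 := by
      linear_combination (2*a*(a^q)*(a^(q^2))^2*r*(r^q)*(r^(q^2))^2 - 4*a*(a^q)*(a^(q^2))^2*r*(r^q)*(r^(q^2)) + 2*a*(a^q)*(a^(q^2))^2*r*(r^(q^2))^2 + 2*a*(a^q)*(a^(q^2))^2*(r^q)^2*(r^(q^2)) - 4*a*(a^q)*(a^(q^2))^2*(r^q)*(r^(q^2))^2 + 2*a*(a^q)*(a^(q^2))^2*(r^q)*(r^(q^2)) - 2*(a^(q^2))*r*(r^q)*(r^(q^2))^2 + 2*(a^(q^2))*r*(r^(q^2))^2 + 2*(a^(q^2))*(r^q)^2*(r^(q^2)) - 2*(a^(q^2))*(r^q)*(r^(q^2))) * E1 + (2*a^2*(a^q)*(a^(q^2))^2*r^2*(r^(q^2))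 - 2*a^2*(a^q)*(a^(q^2))^2*r*(r^q)*(r^(q^2))^2 - 2*a^2*(a^q)*(a^(q^2))^2*r*(r^(q^2)) + 2*a^2*(a^q)*(a^(q^2))^2*(r^q)*(r^(q^2))^2 + 2*a*(a^(q^2))*r^2*(r^(q^2)) + 2*a*(a^(q^2))*r*(r^q)*(r^(q^2))^2 - 4*a*(a^(q^2))*r*(r^q)*(r^(q^2)) - 4*a*(a^(q^2))*r*(r^(q^2))^2 + 2*a*(a^(q^2))*r*(r^(q^2)) + 2*a*(a^(q^2))*(r^q)*(r^(q^2))^2) * E2 + (-a^2*(a^q)^2*(a^(q^2))^2*r^2*(r^(q^2)) + a^2*(a^q)^2*(a^(q^2))^2*r*(r^q)*(r^(q^2))^2 + a^2*(a^q)^2*(a^(q^2))^2*r*(r^q) - a^2*(a^q)^2*(a^(q^2))^2*(r^q)^2*(r^(q^2)) - 2*a*(a^q)*(a^(q^2))*r^2*(r^(q^2)) - 2*a*(a^q)*(a^(q^2))*r*(r^q)*(r^(q^2))^2 + 8*a*(a^q)*(a^(q^2))*r*(r^q)*(r^(q^2)) - 2*a*(a^q)*(a^(q^2))*r*(r^q)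 - 2*a*(a^q)*(a^(q^2))*(r^q)^2*(r^(q^2)) - r^2*(r^(q^2)) + r*(r^q)*(r^(q^2))^2 + r*(r^q) - (r^q)^2*(r^(q^2))) * E3
    have hr1 : r = 1 := by
      rcases mul_eq_zero.mp hD with h' | h'
      · rcases mul_eq_zero.mp h' with h'' | h''
        · exact absurd (pow_eq_zero_iff two_ne_zero |>.mp h'') hn1
        rcases mul_eq_zero.mp h'' with h3 | h3
        · exact absurd h3 hn2
        rcases mul_eq_zero.mp h3 with h4 | h4
        · exact hrone r hr0 (Or.inl h4)
        rcases mul_eq_zero.mp h4 with h5 | h5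
        · exact hrone r hr0 (Or.inr (Or.inr (by linear_combination -h5)))
        · exact hrone r hr0 (Or.inr (Or.inl (by linear_combination -h5)))
      · rcases mul_eq_zero.mp h' with h'' | h''
        · exact absurd (pow_eq_zero_iff hq0 |>.mp h'') hx
        · exact absurd h'' hx
    rw [hr1, one_mul]
end

section
/- Let q = 4^k for a positive integer k, and let α ∈ F_q satisfy α^2 + α + 1 = 0 (i.e., α is a primitive element of the subfield F_4). Define L(x) = x^{q^2} + x^q + α^2·x and ℓ(x) = α·x^{q^2} + x^q + x, as maps on F_{q^3}. Then the map x ↦ L(x^{q+1})·(ℓ(x))^{-1} (where y^{-1} denotes y^{q^3-2}, so 0 maps to 0) is a bijection of F_{q^3}. -/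
/-- For `q = 4^k` and `α` with `α^2 + α + 1 = 0`, letting
`L(x) = x^{q^2} + x^q + α^2·x` and `ℓ(x) = α·x^{q^2} + x^q + x`, the map
`x ↦ L(x^{q+1})·(ℓ(x))^{-1}` is a bijection of `F_{q^3}`. -/
theorem stmt_18 (k q : ℕ) (hk : 0 < k) (hq : q = 4 ^ k)
    (F : Type*) [Field F] [Fintype F] (hF : Fintype.card F = q ^ 3)
    (α : F) (hα : α ^ 2 + α + 1 = 0)
    (L : F → F) (hL : ∀ x, L x = x ^ q ^ 2 + x ^ q + α ^ 2 * x)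
    (ℓ : F → F) (hℓ : ∀ x, ℓ x = α * x ^ q ^ 2 + x ^ q + x) :
    Function.Bijective fun x : F => L (x ^ (q + 1)) * (ℓ x)⁻¹ := by
  -- ## Numerical preliminaries
  have hq2k : q = 2 ^ (2 * k) := by
    rw [hq, show (4:ℕ) = 2 ^ 2 by norm_num, ← pow_mul]
  have hq2_2 : q ^ 2 = 2 ^ (4 * k) := by
    rw [hq2k, ← pow_mul]; congr 1; ring
  have hq3_2 : q ^ 3 = 2 ^ (6 * k) := by
    rw [hq2k, ← pow_mul]; congr 1; ring
  have hq4 : 4 ≤ q := by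
    rw [hq]
    calc (4:ℕ) = 4 ^ 1 := by norm_num
    _ ≤ 4 ^ k := Nat.pow_le_pow_right (by norm_num) hk
  have hq0 : q ≠ 0 := by intro h0; rw [h0] at hq4; exact absurd hq4 (by norm_num)
  -- ## Characteristic 2
  haveI : Fact (Nat.Prime 2) := ⟨Nat.prime_two⟩
  haveI hchar : CharP F 2 := by
    obtain ⟨np, hprime, hcardp⟩ := FiniteField.card F (ringChar F)
    have hdvd : ringChar F ∣ 2 ^ (6 * k) := by
      rw [← hq3_2, ← hF, hcardp]
      exact dvd_pow_self _ (by exact_mod_cast np.ne_zero)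
    have h2 : ringChar F = 2 :=
      (Nat.prime_dvd_prime_iff_eq hprime Nat.prime_two).mp (hprime.dvd_of_dvd_pow hdvd)
    have := ringChar.charP F
    rwa [h2] at this
  have two0 : (2 : F) = 0 := by exact_mod_cast CharP.cast_eq_zero F 2
  -- ## alpha facts
  have hα3 : α ^ 3 = 1 := by linear_combination (α - 1) * hα
  have hα4 : α ^ 4 = α := by linear_combination (α ^ 2 - α) * hα
  have hα4j : ∀ j : ℕ, α ^ 4 ^ j = α := by
    intro j
    induction j with
    | zero => simp
    | succ i ih => rw [pow_succ, pow_mul, ih, hα4]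
  have hαq : α ^ q = α := by rw [hq]; exact hα4j k
  have hα2q : (α ^ 2) ^ q = α ^ 2 := by rw [pow_right_comm, hαq]
  -- ## Frobenius helpers
  have frob2 : ∀ x y : F, (x + y) ^ 2 = x ^ 2 + y ^ 2 := fun x y => add_pow_char x y 2
  have frobq : ∀ x y : F, (x + y) ^ q = x ^ q + y ^ q := by
    intro x y; rw [hq2k]; exact add_pow_char_pow x y 2 (2 * k)
  have frobq2 : ∀ x y : F, (x + y) ^ q ^ 2 = x ^ q ^ 2 + y ^ q ^ 2 := by
    intro x y; rw [hq2_2]; exact add_pow_char_pow x y 2 (4 * k)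
  have powq3 : ∀ x : F, x ^ q ^ 3 = x := by
    intro x; rw [← hF]; exact FiniteField.pow_card x
  have powqq : ∀ x : F, (x ^ q) ^ q = x ^ q ^ 2 := by
    intro x; rw [← pow_mul, pow_two]
  have powq2q : ∀ x : F, (x ^ q ^ 2) ^ q = x := by
    intro x; rw [← pow_mul, show q ^ 2 * q = q ^ 3 by ring]; exact powq3 x
  -- ## the exponents e and h
  obtain ⟨n, hn1⟩ : ∃ n, n + 1 = q ^ 3 :=
    ⟨q ^ 3 - 1, Nat.sub_add_cancel (Nat.one_le_iff_ne_zero.mpr (pow_ne_zero 3 hq0))⟩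
  obtain ⟨e, he1⟩ : ∃ e, e + 1 = q ^ 2 + q :=
    ⟨q ^ 2 + q - 1, Nat.sub_add_cancel (le_trans (by omega) (Nat.le_add_left q _))⟩
  obtain ⟨m2, hm2⟩ : ∃ m2, q = 2 * m2 := by
    refine ⟨2 ^ (2 * k - 1), ?_⟩
    rw [hq2k, ← pow_succ']
    congr 1
    omega
  obtain ⟨h, hh2⟩ : ∃ h, q ^ 2 + q = 2 * h := by
    refine ⟨m2 * (q + 1), ?_⟩
    rw [hm2]; ring
  have hq2q4 : 4 ≤ q ^ 2 + q := le_trans hq4 (Nat.le_add_left q _)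
  have hepos : 0 < e := by
    have h4 : 4 ≤ e + 1 := he1 ▸ hq2q4
    omega
  have hhpos : 0 < h := by
    have h4 : 4 ≤ 2 * h := hh2 ▸ hq2q4
    omega
  have hn63 : 1 < n := by
    have h64 : 64 ≤ q ^ 3 := by
      calc (64:ℕ) = 4 ^ 3 := by norm_num
      _ ≤ q ^ 3 := Nat.pow_le_pow_left hq4 3
    have : 64 ≤ n + 1 := hn1 ▸ h64
    omega
  have hcard1 : Fintype.card F - 1 = n := by
    rw [hF, ← hn1]; omega
  have hpown : ∀ y : F, y ≠ 0 → y ^ n = 1 := by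
    intro y hy
    have := FiniteField.pow_card_sub_one_eq_one y hy
    rwa [hcard1] at this
  -- the key exponent identity e*(q^2+q) = n*(q+2)+2
  have hE2I : e * (q ^ 2 + q) = n * (q + 2) + 2 := by
    have A : e * (q ^ 2 + q) + (q ^ 2 + q) = (q ^ 2 + q) * (q ^ 2 + q) := by
      calc e * (q ^ 2 + q) + (q ^ 2 + q) = (e + 1) * (q ^ 2 + q) := by ring
      _ = (q ^ 2 + q) * (q ^ 2 + q) := by rw [he1]
    have B : n * (q + 2) + (q + 2) = q ^ 3 * (q + 2) := by
      calc n * (q + 2) + (q + 2) = (n + 1) * (q + 2) := by ring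
      _ = q ^ 3 * (q + 2) := by rw [hn1]
    have key : e * (q ^ 2 + q) + ((q ^ 2 + q) + (q + 2))
        = n * (q + 2) + 2 + ((q ^ 2 + q) + (q + 2)) := by
      calc e * (q ^ 2 + q) + ((q ^ 2 + q) + (q + 2))
          = (e * (q ^ 2 + q) + (q ^ 2 + q)) + (q + 2) := by ring
      _ = (q ^ 2 + q) * (q ^ 2 + q) + (q + 2) := by rw [A]
      _ = q ^ 3 * (q + 2) + 2 + (q ^ 2 + q) := by ring
      _ = (n * (q + 2) + (q + 2)) + 2 + (q ^ 2 + q) := by rw [B]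
      _ = n * (q + 2) + 2 + ((q ^ 2 + q) + (q + 2)) := by ring
    exact Nat.add_right_cancel key
  -- ## coprimality of e and n
  have hcop : Nat.Coprime e n := by
    obtain ⟨p, hp⟩ : ∃ p, q = p + 1 := ⟨q - 1, by omega⟩
    have hep : e = p * (p + 3) + 1 := by
      have h2 : e + 1 = (p * (p + 3) + 1) + 1 := by
        rw [he1, hp]; ring
      exact Nat.add_right_cancel h2
    have hnp : n = p * (p ^ 2 + 3 * p + 3) := by
      have h2 : n + 1 = (p * (p ^ 2 + 3 * p + 3)) + 1 := by
        rw [hn1, hp]; ring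
      exact Nat.add_right_cancel h2
    rw [hnp]
    apply Nat.Coprime.mul_right
    · have h1 : Nat.gcd p e = 1 := by
        rw [hep, show p * (p + 3) + 1 = 1 + (p + 3) * p by ring,
          Nat.gcd_add_mul_right_right p 1 (p + 3)]
        exact Nat.gcd_one_right p
      exact Nat.coprime_comm.mp h1
    · have hfac2 : p ^ 2 + 3 * p + 3 = e + 2 := by rw [hep]; ring
      rw [hfac2]
      have hodd : e % 2 = 1 := by
        have hev : (p * (p + 3)) % 2 = 0 := by
          rcases Nat.even_or_odd p with hpe | hpo
          · exact Nat.even_iff.mp (hpe.mul_right _)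
          · exact Nat.even_iff.mp ((hpo.add_odd ⟨1, by norm_num⟩).mul_left _)
        obtain ⟨t, ht⟩ : ∃ t, t = p * (p + 3) := ⟨_, rfl⟩
        rw [← ht] at hep hev
        omega
      have hco2 : Nat.Coprime 2 e :=
        (Nat.Prime.coprime_iff_not_dvd Nat.prime_two).mpr (by
          intro hd
          obtain ⟨c, hc⟩ := hd
          omega)
      have h1 : Nat.gcd e (e + 2) = Nat.gcd e 2 := by
        rw [show e + 2 = 2 + 1 * e by ring, Nat.gcd_add_mul_right_right]
      show Nat.gcd e (e + 2) = 1
      rw [h1]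
      exact hco2.symm
  -- ## x ↦ x^e is injective
  have hpow_inj : ∀ y1 y2 : F, y1 ^ e = y2 ^ e → y1 = y2 := by
    have hφpos : 0 < Nat.totient n := Nat.totient_pos.mpr (by omega)
    obtain ⟨E, hE⟩ : ∃ E, E = e ^ Nat.totient n := ⟨_, rfl⟩
    have hEmod : E % n = 1 := by
      have h1 := Nat.ModEq.pow_totient hcop
      have h2 : e ^ Nat.totient n % n = 1 % n := h1
      rw [← hE] at h2
      rw [h2, Nat.mod_eq_of_lt hn63]
    obtain ⟨t, hEt⟩ : ∃ t, E = n * t + 1 := by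
      refine ⟨E / n, ?_⟩
      have := Nat.div_add_mod E n
      omega
    have hEpos : E ≠ 0 := by omega
    have hyE : ∀ y : F, y ^ E = y := by
      intro y
      by_cases hy : y = 0
      · rw [hy]; exact zero_pow hEpos
      · rw [hEt, pow_add, pow_mul, hpown y hy, one_pow, one_mul, pow_one]
    intro y1 y2 hy
    have h1 : (y1 ^ e) ^ e ^ (Nat.totient n - 1) = (y2 ^ e) ^ e ^ (Nat.totient n - 1) := by
      rw [hy]
    rw [← pow_mul, ← pow_mul] at h1
    have hee : e * e ^ (Nat.totient n - 1) = E := by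
      rw [hE, ← pow_succ']
      congr 1
      omega
    rw [hee, hyE y1, hyE y2] at h1
    exact h1
  -- ## (y^e)^h = y for y ≠ 0
  have hyeh : ∀ y : F, y ≠ 0 → (y ^ e) ^ h = y := by
    intro y hy
    have hsq : ((y ^ e) ^ h) ^ 2 = y ^ 2 := by
      rw [← pow_mul, ← pow_mul]
      have hexp : e * (h * 2) = n * (q + 2) + 2 := by
        rw [show h * 2 = 2 * h by ring, ← hh2]; exact hE2I
      rw [hexp, pow_add, pow_mul, hpown y hy, one_pow, one_mul]
    have h0 : ((y ^ e) ^ h - y) ^ 2 = 0 := by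
      rw [sub_pow_char, hsq, sub_self]
    have h1 : (y ^ e) ^ h - y = 0 := (pow_eq_zero_iff (by norm_num)).mp h0
    exact sub_eq_zero.mp h1
  -- ## ℓ is injective
  have hl_inj : ∀ x1 x2 : F, ℓ x1 = ℓ x2 → x1 = x2 := by
    intro x1 x2 hx
    set w := x1 + x2 with hw
    have hK0 : α * w ^ q ^ 2 + w ^ q + w = 0 := by
      have h1 : ℓ x1 + ℓ x2 = 0 := by rw [hx]; linear_combination (ℓ x2) * two0
      rw [hℓ, hℓ] at h1
      have h2 : w ^ q = x1 ^ q + x2 ^ q := frobq x1 x2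
      have h3 : w ^ q ^ 2 = x1 ^ q ^ 2 + x2 ^ q ^ 2 := frobq2 x1 x2
      rw [h2, h3]
      linear_combination h1
    set W1 := w ^ q with hW1
    set W2 := w ^ q ^ 2 with hW2
    have eW0 : w ^ q = W1 := rfl
    have eW1 : W1 ^ q = W2 := by rw [hW1, hW2]; exact powqq w
    have eW2 : W2 ^ q = w := by rw [hW2]; exact powq2q w
    have hK1 : α * w + W2 + W1 = 0 := by
      have h1 := congrArg (fun z : F => z ^ q) hK0
      rw [frobq, frobq, mul_pow, hαq, eW0, eW1, eW2, zero_pow hq0] at h1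
      linear_combination h1
    have hK2 : α * W1 + w + W2 = 0 := by
      have h1 := congrArg (fun z : F => z ^ q) hK1
      rw [frobq, frobq, mul_pow, hαq, eW0, eW1, eW2, zero_pow hq0] at h1
      linear_combination h1
    have hw0 : w = 0 := by
      linear_combination hK0 + α ^ 2 * hK1 + hK2 + (-W2 - W1 + w - α * w) * hα + (-w) * two0
    have : x1 + x2 = 0 := hw0
    linear_combination this - x2 * two0
  -- ## the core injectivity: m(y) = α²y^h + αy is injective
  have hm_inj : ∀ u v : F, α ^ 2 * u ^ h + α * u = α ^ 2 * v ^ h + α * v → u = v := by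
    intro u v huv
    set s := u + v with hs
    have hv : v = u + s := by rw [hs]; linear_combination (-u) * two0
    set U1 := u ^ q with hU1
    set U2 := u ^ q ^ 2 with hU2
    set S1 := s ^ q with hS1
    set S2 := s ^ q ^ 2 with hS2
    have eU1 : U1 ^ q = U2 := by rw [hU1, hU2]; exact powqq u
    have eU2 : U2 ^ q = u := by rw [hU2]; exact powq2q u
    have eS0 : s ^ q = S1 := rfl
    have eS1 : S1 ^ q = S2 := by rw [hS1, hS2]; exact powqq s
    have eS2 : S2 ^ q = s := by rw [hS2]; exact powq2q s
    -- squared equation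
    have h1 : α * (U2 * U1) + α ^ 2 * u ^ 2 = α * ((U2 + S2) * (U1 + S1)) + α ^ 2 * (u + s) ^ 2 := by
      have h2 : (α ^ 2 * u ^ h + α * u) ^ 2 = (α ^ 2 * v ^ h + α * v) ^ 2 := by rw [huv]
      rw [frob2, frob2, mul_pow, mul_pow, mul_pow, mul_pow] at h2
      have hu2h : (u ^ h) ^ 2 = U2 * U1 := by
        rw [← pow_mul, show h * 2 = 2 * h by ring, ← hh2, pow_add]
      have hv2h : (v ^ h) ^ 2 = (U2 + S2) * (U1 + S1) := by
        rw [← pow_mul, show h * 2 = 2 * h by ring, ← hh2, pow_add, hv, frobq2, frobq]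
      have hvv : v ^ 2 = (u + s) ^ 2 := by rw [hv]
      rw [hu2h, hv2h, hvv] at h2
      have hα22 : (α ^ 2) ^ 2 = α * α ^ 3 := by ring
      rw [hα22, hα3, mul_one] at h2
      linear_combination h2
    have hCE : U2 * S1 + U1 * S2 + S2 * S1 = α * s ^ 2 := by
      linear_combination (-(α ^ 2)) * h1 +
        (S1 * S2 + U2 * S1 + U1 * S2 - α * S1 * S2 + α * s ^ 2 - α * U2 * S1 - α * U1 * S2 +
          2 * α * u * s - α ^ 2 * s ^ 2 - 2 * α ^ 2 * u * s) * hα +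
        (-(α * s ^ 2) - α * u * s) * two0
    have hCE1 : u * S2 + U2 * s + s * S2 = α * S1 ^ 2 := by
      have h2 := congrArg (fun z : F => z ^ q) hCE
      rw [frobq, frobq, mul_pow, mul_pow, mul_pow, mul_pow, hαq, eU1, eU2, eS1, eS2,
        pow_right_comm s 2 q, eS0] at h2
      linear_combination h2
    have hCE2 : U1 * s + u * S1 + S1 * s = α * S2 ^ 2 := by
      have h2 := congrArg (fun z : F => z ^ q) hCE1
      rw [frobq, frobq, mul_pow, mul_pow, mul_pow, mul_pow, hαq, ← hU1, eU2, eS0, eS2,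
        pow_right_comm S1 2 q, eS1] at h2
      linear_combination h2
    have hP : s * S1 * S2 = α * (s ^ 3 + S1 ^ 3 + S2 ^ 3) := by
      linear_combination s * hCE + S1 * hCE1 + S2 * hCE2 +
        (-(s * S1 * S2) - U2 * s * S1 - U1 * s * S2 - u * S1 * S2) * two0
    have hfac : (s + α ^ 2 * S1 + S2) * ((s + S1 + α ^ 2 * S2) * (s + α * S1 + α * S2)) = 0 := by
      linear_combination (-(α ^ 2)) * hP +
        (-(s * S1 * S2) + s ^ 2 * S2 + s ^ 2 * S1 + s ^ 3 + α * S1 * S2 ^ 2 + α * S1 ^ 2 * S2 +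
          α * s * S2 ^ 2 + α * s * S1 * S2 + α * s * S1 ^ 2 - α * s ^ 3 - α ^ 2 * S1 * S2 ^ 2 -
          α ^ 2 * S1 ^ 2 * S2 + α ^ 2 * s * S1 * S2 + α ^ 3 * S1 * S2 ^ 2 + α ^ 3 * S1 ^ 2 * S2) * hα +
        (s * S1 * S2 + α * s * S1 * S2) * two0
    have hs0 : s = 0 := by
      rcases mul_eq_zero.mp hfac with hT0 | h23
      · have hT1 : s + S1 + α ^ 2 * S2 = 0 := by
          have h2 := congrArg (fun z : F => z ^ q) hT0
          rw [frobq, frobq, mul_pow, hα2q, eS0, eS1, eS2, zero_pow hq0] at h2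
          linear_combination h2
        have hT2 : α ^ 2 * s + S1 + S2 = 0 := by
          have h2 := congrArg (fun z : F => z ^ q) hT1
          rw [frobq, frobq, mul_pow, hα2q, eS0, eS1, eS2, zero_pow hq0] at h2
          linear_combination h2
        linear_combination hT0 + hT1 + α * hT2 + (-S2 - S1 + s - α * s) * hα + (-s) * two0
      rcases mul_eq_zero.mp h23 with hT0 | hT0
      · have hT1 : α ^ 2 * s + S1 + S2 = 0 := by
          have h2 := congrArg (fun z : F => z ^ q) hT0
          rw [frobq, frobq, mul_pow, hα2q, eS0, eS1, eS2, zero_pow hq0] at h2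
          linear_combination h2
        have hT2 : s + α ^ 2 * S1 + S2 = 0 := by
          have h2 := congrArg (fun z : F => z ^ q) hT1
          rw [frobq, frobq, mul_pow, hα2q, eS0, eS1, eS2, zero_pow hq0] at h2
          linear_combination h2
        linear_combination hT0 + α * hT1 + hT2 + (-S2 - S1 + s - α * s) * hα + (-s) * two0
      · have hT1 : α * s + S1 + α * S2 = 0 := by
          have h2 := congrArg (fun z : F => z ^ q) hT0
          rw [frobq, frobq, mul_pow, mul_pow, hαq, eS0, eS1, eS2, zero_pow hq0] at h2
          linear_combination h2
        have hT2 : α * s + α * S1 + S2 = 0 := by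
          have h2 := congrArg (fun z : F => z ^ q) hT1
          rw [frobq, frobq, mul_pow, mul_pow, hαq, eS0, eS1, eS2, zero_pow hq0] at h2
          linear_combination h2
        linear_combination hT0 + α ^ 2 * hT1 + α ^ 2 * hT2 +
          (2 * s - α * S2 - α * S1 - 2 * α * s) * hα + (-s) * two0
    have : v = u := by rw [hv, hs0, add_zero]
    exact this.symm
  -- ## the identity L(x^{q+1}) = α·(ℓx)^q·(ℓx)^{q²} + α²·(ℓx)²
  have hIDL : ∀ x : F, L (x ^ (q + 1)) = α * ((ℓ x) ^ q * (ℓ x) ^ q ^ 2) + α ^ 2 * (ℓ x) ^ 2 := by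
    intro x
    have hb : (x ^ q) ^ q = x ^ q ^ 2 := powqq x
    have hc : (x ^ q ^ 2) ^ q = x := powq2q x
    have hx1 : x ^ (q + 1) = x ^ q * x := pow_succ x q
    have hLq : (x ^ (q + 1)) ^ q = x ^ q ^ 2 * x ^ q := by
      rw [hx1, mul_pow, hb]
    have hLq2 : (x ^ (q + 1)) ^ q ^ 2 = x * x ^ q ^ 2 := by
      rw [← powqq (x ^ (q + 1)), hLq, mul_pow, hc, hb]
    have hlq : (ℓ x) ^ q = α * x + x ^ q ^ 2 + x ^ q := by
      rw [hℓ, frobq, frobq, mul_pow, hαq, hb, hc]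
    have hlq2 : (ℓ x) ^ q ^ 2 = α * x ^ q + x + x ^ q ^ 2 := by
      rw [← powqq (ℓ x), hlq, frobq, frobq, mul_pow, hαq, hb, hc]
    rw [hL, hLq, hLq2, hlq, hlq2, hℓ]
    linear_combination
      (x ^ q * x ^ q ^ 2 - 2 * (x ^ q) ^ 2 + x * x ^ q ^ 2 - 2 * x ^ 2 + α * (x ^ q ^ 2) ^ 2 -
        2 * α * x ^ q * x ^ q ^ 2 - 2 * α * x * x ^ q ^ 2 - α * x * x ^ q - α ^ 2 * (x ^ q ^ 2) ^ 2) * hα +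
      ((x ^ q) ^ 2 + x ^ 2 - α * (x ^ q ^ 2) ^ 2 + α * (x ^ q) ^ 2 + α * x ^ 2) * two0
  -- ## the main pointwise identity  f x = m((ℓx)^e)
  have hepos' : e ≠ 0 := by omega
  have hhpos' : h ≠ 0 := by omega
  have hfm : ∀ x : F, L (x ^ (q + 1)) * (ℓ x)⁻¹ = α ^ 2 * ((ℓ x) ^ e) ^ h + α * (ℓ x) ^ e := by
    intro x
    by_cases hy : ℓ x = 0
    · rw [hy, inv_zero, mul_zero, zero_pow hepos', zero_pow hhpos', mul_zero, mul_zero, add_zero]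
    · apply mul_right_cancel₀ hy
      rw [mul_assoc, inv_mul_cancel₀ hy, mul_one]
      have h1 : ((ℓ x) ^ e) ^ h = ℓ x := hyeh (ℓ x) hy
      have h2 : (ℓ x) ^ e * ℓ x = (ℓ x) ^ q ^ 2 * (ℓ x) ^ q := by
        rw [← pow_succ, he1, pow_add]
      rw [add_mul, h1, mul_assoc α ((ℓ x) ^ e) (ℓ x), h2, hIDL x]
      ring
  -- ## assemble
  refine Finite.injective_iff_bijective.mp ?_
  intro x1 x2 hx
  replace hx : L (x1 ^ (q + 1)) * (ℓ x1)⁻¹ = L (x2 ^ (q + 1)) * (ℓ x2)⁻¹ := hx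
  rw [hfm x1, hfm x2] at hx
  exact hl_inj _ _ (hpow_inj _ _ (hm_inj _ _ hx))
end

section
/- Let q be a prime power and a ∈ F_{q^3} nonzero with N(a) ≠ -1, where N(x) = x^{q^2+q+1} is the norm from F_{q^3} to F_q. Then the map f : x ↦ x^{q^2} - a^{q^2}·x^{q^2+q-1} + a^{q^2+q}·x^q is a bijection of F_{q^3}, and so is the map x ↦ x - a·x^{q^2-q+1} + a^{q^2+1}·x^{q^2}. Moreover, if q is odd, the map x ↦ x^{(q^3+q)/2} - a·x + a^{q^2+1}·x^{(q^2+1)/2} is also a bijection of F_{q^3}. -/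
/-- For `a ≠ 0` with `N(a) ≠ -1`, the maps
`x ↦ x^{q^2} - a^{q^2} x^{q^2+q-1} + a^{q^2+q} x^q` and
`x ↦ x - a x^{q^2-q+1} + a^{q^2+1} x^{q^2}` are bijections of `F_{q^3}`; moreover, if `q`
is odd, so is `x ↦ x^{(q^3+q)/2} - a x + a^{q^2+1} x^{(q^2+1)/2}`. -/
theorem stmt_19 (q : ℕ) (hq : IsPrimePow q)
    (F : Type*) [Field F] [Fintype F] (hF : Fintype.card F = q ^ 3)
    (a : F) (ha : a ≠ 0) (hNa : a ^ (q ^ 2 + q + 1) ≠ -1) :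
    (Function.Bijective fun x : F =>
      x ^ q ^ 2 - a ^ q ^ 2 * x ^ (q ^ 2 + q - 1) + a ^ (q ^ 2 + q) * x ^ q) ∧
    (Function.Bijective fun x : F =>
      x - a * x ^ (q ^ 2 - q + 1) + a ^ (q ^ 2 + 1) * x ^ q ^ 2) ∧
    (Odd q → Function.Bijective fun x : F =>
      x ^ ((q ^ 3 + q) / 2) - a * x + a ^ (q ^ 2 + 1) * x ^ ((q ^ 2 + 1) / 2)) := by
  classical
  obtain ⟨p, k, hpp, hk, hpk⟩ := hq
  have hp : Nat.Prime p := Nat.prime_iff.mpr hpp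
  haveI : Fact (Nat.Prime p) := ⟨hp⟩
  have hq2 : 2 ≤ q := by
    rw [← hpk]
    calc 2 ≤ p := hp.two_le
      _ ≤ p ^ k := Nat.le_self_pow hk.ne' p
  have hle1 : 1 ≤ q := by omega
  have hle2 : q ≤ q ^ 2 := Nat.le_self_pow two_ne_zero q
  have hle3 : q ^ 2 ≤ q ^ 3 := Nat.pow_le_pow_right (by omega) (by omega)
  have hq2ne : q ^ 2 ≠ 0 := by omega
  -- CharP F p
  haveI hcharF : CharP F p := by
    haveI := ringChar.charP F
    obtain ⟨n, hn, hcard'⟩ := FiniteField.card F (ringChar F)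
    have hdvd : ringChar F ∣ p ^ (k * 3) := by
      have h1 : ringChar F ∣ Fintype.card F := by
        rw [hcard']; exact dvd_pow_self _ n.pos.ne'
      rwa [hF, ← hpk, ← pow_mul] at h1
    have heq : ringChar F = p :=
      (Nat.prime_dvd_prime_iff_eq hn hp).mp (hn.dvd_of_dvd_pow hdvd)
    rw [← heq]; exact ringChar.charP F
  have hpow3 : ∀ x : F, x ^ q ^ 3 = x := by
    intro x; rw [← hF]; exact FiniteField.pow_card x
  have hfadd : ∀ (n : ℕ) (x y : F), (x + y) ^ q ^ n = x ^ q ^ n + y ^ q ^ n := by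
    intro n x y
    rw [← hpk, ← pow_mul]
    exact add_pow_char_pow x y p (k * n)
  have hfsub : ∀ (n : ℕ) (x y : F), (x - y) ^ q ^ n = x ^ q ^ n - y ^ q ^ n := by
    intro n x y
    rw [← hpk, ← pow_mul]
    exact sub_pow_char_pow x y (k * n)
  have hfadd1 : ∀ x y : F, (x + y) ^ q = x ^ q + y ^ q := by
    intro x y; have := hfadd 1 x y; simpa using this
  have hm : (1 : F) + a ^ (q ^ 2 + q + 1) ≠ 0 := by
    intro h; exact hNa (by linear_combination h)
  -- the core map G
  set G : F → F := fun x => x - a * x ^ (q ^ 2 - q + 1) + a ^ (q ^ 2 + 1) * x ^ q ^ 2 with hGdef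
  have hGapp : ∀ x : F, G x = x - a * x ^ (q ^ 2 - q + 1) + a ^ (q ^ 2 + 1) * x ^ q ^ 2 := by
    intro x; rw [hGdef]
  -- expansion of (G x)^(q^2)
  have hGpow : ∀ x : F, (G x) ^ q ^ 2
      = x ^ q ^ 2 - a ^ q ^ 2 * x ^ ((q ^ 2 - q + 1) * q ^ 2)
        + a ^ ((q ^ 2 + 1) * q ^ 2) * x ^ (q ^ 2 * q ^ 2) := by
    intro x
    rw [hGapp, hfadd 2, hfsub 2, mul_pow, mul_pow, ← pow_mul x (q ^ 2 - q + 1),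
      ← pow_mul a (q ^ 2 + 1), ← pow_mul x (q ^ 2)]
  have r2 : a ^ ((q ^ 2 + 1) * q ^ 2) = a ^ (q ^ 2 + q) := by
    rw [show (q ^ 2 + 1) * q ^ 2 = q ^ 3 * q + q ^ 2 by ring, pow_add, pow_mul, hpow3, ← pow_add,
      show q + q ^ 2 = q ^ 2 + q by ring]
  -- key identity I1
  have I1 : ∀ x : F, (1 + a ^ (q ^ 2 + q + 1)) * x ^ (q + 1)
      = G x * x ^ q + a * (G x) ^ q ^ 2 * x := by
    intro x
    have r1 : x ^ ((q ^ 2 - q + 1) * q ^ 2) * x = x ^ (q ^ 2 + q) := by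
      rw [← pow_succ, show (q ^ 2 - q + 1) * q ^ 2 + 1 = q ^ 3 * (q - 1) + (q ^ 2 + 1) by
        zify [hle2, hle1]; ring, pow_add, pow_mul, hpow3, ← pow_add,
        show q - 1 + (q ^ 2 + 1) = q ^ 2 + q by omega]
    have r3 : x ^ (q ^ 2 * q ^ 2) * x = x ^ (q + 1) := by
      rw [← pow_succ, show q ^ 2 * q ^ 2 + 1 = q ^ 3 * q + 1 by ring, pow_add, pow_mul, hpow3,
        pow_one, ← pow_succ]
    have he : q ^ 2 - q + 1 + q = q ^ 2 + 1 := by omega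
    have hA : G x * x ^ q
        = x ^ (q + 1) - a * x ^ (q ^ 2 + 1) + a ^ (q ^ 2 + 1) * x ^ (q ^ 2 + q) := by
      rw [hGapp, ← he]; ring
    have hB : a * (G x) ^ q ^ 2 * x
        = a * x ^ (q ^ 2 + 1) - a ^ (q ^ 2 + 1) * x ^ (q ^ 2 + q)
          + a ^ (q ^ 2 + q + 1) * x ^ (q + 1) := by
      rw [hGpow]
      calc a * (x ^ q ^ 2 - a ^ q ^ 2 * x ^ ((q ^ 2 - q + 1) * q ^ 2)
              + a ^ ((q ^ 2 + 1) * q ^ 2) * x ^ (q ^ 2 * q ^ 2)) * x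
          = a * (x ^ q ^ 2 * x) - (a * a ^ q ^ 2) * (x ^ ((q ^ 2 - q + 1) * q ^ 2) * x)
              + (a * a ^ ((q ^ 2 + 1) * q ^ 2)) * (x ^ (q ^ 2 * q ^ 2) * x) := by ring
        _ = _ := by rw [r1, r2, r3]; ring
    rw [hA, hB]; ring
  -- Frobenius twists of I1
  have hNq : (a ^ (q ^ 2 + q + 1)) ^ q = a ^ (q ^ 2 + q + 1) := by
    rw [← pow_mul, show (q ^ 2 + q + 1) * q = q ^ 3 + (q ^ 2 + q) by ring, pow_add, hpow3,
      ← pow_succ']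
  have I2 : ∀ x : F, (1 + a ^ (q ^ 2 + q + 1)) * x ^ (q ^ 2 + q)
      = (G x) ^ q * x ^ q ^ 2 + a ^ q * G x * x ^ q := by
    intro x
    have h : ((1 + a ^ (q ^ 2 + q + 1)) * x ^ (q + 1)) ^ q
        = (G x * x ^ q + a * (G x) ^ q ^ 2 * x) ^ q := by rw [I1 x]
    rw [hfadd1 (G x * x ^ q), mul_pow, hfadd1 1, one_pow, hNq, mul_pow (G x), mul_pow, mul_pow,
      ← pow_mul x (q + 1), ← pow_mul x q, ← pow_mul (G x) (q ^ 2),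
      show (q + 1) * q = q ^ 2 + q by ring, show q * q = q ^ 2 by ring,
      show q ^ 2 * q = q ^ 3 by ring, hpow3] at h
    linear_combination h
  have I3 : ∀ x : F, (1 + a ^ (q ^ 2 + q + 1)) * x ^ (q ^ 2 + 1)
      = (G x) ^ q ^ 2 * x + a ^ q ^ 2 * (G x) ^ q * x ^ q ^ 2 := by
    intro x
    have h : ((1 + a ^ (q ^ 2 + q + 1)) * x ^ (q ^ 2 + q)) ^ q
        = ((G x) ^ q * x ^ q ^ 2 + a ^ q * G x * x ^ q) ^ q := by rw [I2 x]
    rw [hfadd1 ((G x) ^ q * x ^ q ^ 2), mul_pow, hfadd1 1, one_pow, hNq,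
      mul_pow ((G x) ^ q), mul_pow (a ^ q * G x), mul_pow (a ^ q),
      ← pow_mul x (q ^ 2 + q), ← pow_mul (G x) q, ← pow_mul x (q ^ 2), ← pow_mul a q,
      ← pow_mul x q,
      show (q ^ 2 + q) * q = q ^ 3 + q ^ 2 by ring, show q * q = q ^ 2 by ring,
      show q ^ 2 * q = q ^ 3 by ring, pow_add x, hpow3] at h
    linear_combination h
  -- G sends only 0 to 0
  have hG0 : G 0 = 0 := by
    rw [hGapp, zero_pow (by omega : q ^ 2 - q + 1 ≠ 0), zero_pow hq2ne]; ring
  have hzero : ∀ x : F, G x = 0 → x = 0 := by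
    intro x hx
    have h := I1 x
    rw [hx, zero_pow hq2ne] at h
    simp only [zero_mul, mul_zero, add_zero] at h
    rcases mul_eq_zero.mp h with h' | h'
    · exact absurd h' hm
    · exact (pow_eq_zero_iff (by omega : q + 1 ≠ 0)).mp h'
  -- main injectivity computation
  have key : ∀ x : F, x ≠ 0 → G x ≠ 0 →
      x * ((G x) ^ q + a ^ (q + 1) * G x - a * (G x) ^ q ^ 2) = (G x) ^ (q + 1) := by
    intro x hx hc
    have h1 := I1 x
    have h2 := I2 x
    have h3 := I3 x
    have e1 : x ^ q * ((1 + a ^ (q ^ 2 + q + 1)) * x - G x) = a * (G x) ^ q ^ 2 * x := by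
      linear_combination h1
    have e3 : x ^ q ^ 2 * ((1 + a ^ (q ^ 2 + q + 1)) * x - a ^ q ^ 2 * (G x) ^ q)
        = (G x) ^ q ^ 2 * x := by
      linear_combination h3
    have hcq2 : (G x) ^ q ^ 2 ≠ 0 := pow_ne_zero _ hc
    have hd1 : (1 + a ^ (q ^ 2 + q + 1)) * x - G x ≠ 0 := by
      intro h0
      have : a * (G x) ^ q ^ 2 * x = 0 := by rw [← e1, h0, mul_zero]
      rcases mul_eq_zero.mp this with h' | h'
      · rcases mul_eq_zero.mp h' with h'' | h''
        · exact ha h''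
        · exact hcq2 h''
      · exact hx h'
    have hd2 : (1 + a ^ (q ^ 2 + q + 1)) * x - a ^ q ^ 2 * (G x) ^ q ≠ 0 := by
      intro h0
      have : (G x) ^ q ^ 2 * x = 0 := by rw [← e3, h0, mul_zero]
      rcases mul_eq_zero.mp this with h' | h'
      · exact hcq2 h'
      · exact hx h'
    have comb : (1 + a ^ (q ^ 2 + q + 1)) * (a * (G x) ^ q ^ 2 * x) * ((G x) ^ q ^ 2 * x)
        = (G x) ^ q * ((G x) ^ q ^ 2 * x) * ((1 + a ^ (q ^ 2 + q + 1)) * x - G x)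
          + a ^ q * G x * (a * (G x) ^ q ^ 2 * x)
            * ((1 + a ^ (q ^ 2 + q + 1)) * x - a ^ q ^ 2 * (G x) ^ q) := by
      calc (1 + a ^ (q ^ 2 + q + 1)) * (a * (G x) ^ q ^ 2 * x) * ((G x) ^ q ^ 2 * x)
          = (1 + a ^ (q ^ 2 + q + 1))
              * (x ^ q * ((1 + a ^ (q ^ 2 + q + 1)) * x - G x))
              * (x ^ q ^ 2 * ((1 + a ^ (q ^ 2 + q + 1)) * x - a ^ q ^ 2 * (G x) ^ q)) := by
            rw [e1, e3]
        _ = ((1 + a ^ (q ^ 2 + q + 1)) * x ^ (q ^ 2 + q))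
              * (((1 + a ^ (q ^ 2 + q + 1)) * x - G x)
                * ((1 + a ^ (q ^ 2 + q + 1)) * x - a ^ q ^ 2 * (G x) ^ q)) := by
            rw [show x ^ (q ^ 2 + q) = x ^ q ^ 2 * x ^ q from pow_add x (q ^ 2) q]; ring
        _ = ((G x) ^ q * x ^ q ^ 2 + a ^ q * G x * x ^ q)
              * (((1 + a ^ (q ^ 2 + q + 1)) * x - G x)
                * ((1 + a ^ (q ^ 2 + q + 1)) * x - a ^ q ^ 2 * (G x) ^ q)) := by rw [h2]
        _ = (G x) ^ q
              * (x ^ q ^ 2 * ((1 + a ^ (q ^ 2 + q + 1)) * x - a ^ q ^ 2 * (G x) ^ q))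
              * ((1 + a ^ (q ^ 2 + q + 1)) * x - G x)
            + a ^ q * G x * (x ^ q * ((1 + a ^ (q ^ 2 + q + 1)) * x - G x))
              * ((1 + a ^ (q ^ 2 + q + 1)) * x - a ^ q ^ 2 * (G x) ^ q) := by ring
        _ = _ := by rw [e1, e3]
    have hmm : (1 + a ^ (q ^ 2 + q + 1)) * ((G x) ^ q ^ 2 * x) ≠ 0 :=
      mul_ne_zero hm (mul_ne_zero hcq2 hx)
    have final : ((1 + a ^ (q ^ 2 + q + 1)) * ((G x) ^ q ^ 2 * x))
          * (x * ((G x) ^ q + a ^ (q + 1) * G x - a * (G x) ^ q ^ 2))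
        = ((1 + a ^ (q ^ 2 + q + 1)) * ((G x) ^ q ^ 2 * x)) * (G x) ^ (q + 1) := by
      linear_combination -comb
    exact mul_left_cancel₀ hmm final
  -- injectivity of G
  have hGinj : Function.Injective G := by
    intro x y hxy
    by_cases hx0 : G x = 0
    · rw [hzero x hx0, hzero y (hxy ▸ hx0)]
    · have hy0 : G y ≠ 0 := fun h => hx0 (hxy ▸ h)
      have hx : x ≠ 0 := fun h => hx0 (by rw [h, hG0])
      have hy : y ≠ 0 := fun h => hy0 (by rw [h, hG0])
      have k1 := key x hx hx0
      have k2 := key y hy hy0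
      rw [hxy] at k1
      have hD : (G y) ^ q + a ^ (q + 1) * G y - a * (G y) ^ q ^ 2 ≠ 0 := by
        intro h0
        rw [h0, mul_zero] at k1
        exact pow_ne_zero (q + 1) hy0 k1.symm
      exact mul_right_cancel₀ hD (k1.trans k2.symm)
  have hGbij : Function.Bijective G := Finite.injective_iff_bijective.mp hGinj
  refine ⟨?_, hGbij, ?_⟩
  · -- part 1 : x ↦ (G x)^(q^2)
    have hfrobbij : Function.Bijective (fun y : F => y ^ q ^ 2) := by
      apply Finite.injective_iff_bijective.mp
      intro u v h
      have h' : (u - v) ^ q ^ 2 = 0 := by rw [hfsub 2]; simp only at h; rw [h, sub_self]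
      have := (pow_eq_zero_iff hq2ne).mp h'
      exact sub_eq_zero.mp this
    have hcomp : (fun x : F =>
        x ^ q ^ 2 - a ^ q ^ 2 * x ^ (q ^ 2 + q - 1) + a ^ (q ^ 2 + q) * x ^ q)
        = (fun y : F => y ^ q ^ 2) ∘ G := by
      funext x
      have rr1 : x ^ ((q ^ 2 - q + 1) * q ^ 2) = x ^ (q ^ 2 + q - 1) := by
        rw [show (q ^ 2 - q + 1) * q ^ 2 = q ^ 3 * (q - 1) + q ^ 2 by zify [hle2, hle1]; ring,
          pow_add, pow_mul, hpow3, ← pow_add, show q - 1 + q ^ 2 = q ^ 2 + q - 1 by omega]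
      have rr3 : x ^ (q ^ 2 * q ^ 2) = x ^ q := by
        rw [show q ^ 2 * q ^ 2 = q ^ 3 * q by ring, pow_mul, hpow3]
      show _ = (G x) ^ q ^ 2
      rw [hGpow, rr1, r2, rr3]
    rw [hcomp]
    exact hfrobbij.comp hGbij
  · -- part 3, odd q
    intro hodd
    have hqmod2 : q % 2 = 1 := Nat.odd_iff.mp hodd
    have hq2mod2 : q ^ 2 % 2 = 1 := by rw [Nat.pow_mod, hqmod2]
    have hq3mod2 : q ^ 3 % 2 = 1 := by rw [Nat.pow_mod, hqmod2]
    have hq3mod4 : q ^ 3 % 4 = q % 4 := by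
      have h4 : q % 4 = 1 ∨ q % 4 = 3 := by omega
      rcases h4 with h | h <;> rw [Nat.pow_mod, h]
    have hq3ge : 3 ≤ q ^ 3 := by omega
    -- exponent identities
    have ia : (q + 1) / 2 * (q ^ 2 - q + 1) = (q ^ 3 + 1) / 2 := by
      have h2a : 2 * ((q + 1) / 2) = q + 1 := by omega
      have h2b : 2 * ((q ^ 3 + 1) / 2) = q ^ 3 + 1 := by omega
      apply Nat.eq_of_mul_eq_mul_left (show 0 < 2 by norm_num)
      calc 2 * ((q + 1) / 2 * (q ^ 2 - q + 1)) = 2 * ((q + 1) / 2) * (q ^ 2 - q + 1) := by ring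
        _ = (q + 1) * (q ^ 2 - q + 1) := by rw [h2a]
        _ = q ^ 3 + 1 := by zify [hle2]; ring
        _ = 2 * ((q ^ 3 + 1) / 2) := h2b.symm
    have ib : (q + 1) / 2 * q ^ 2 = (q ^ 3 + q ^ 2) / 2 := by
      have h2a : 2 * ((q + 1) / 2) = q + 1 := by omega
      have h2b : 2 * ((q ^ 3 + q ^ 2) / 2) = q ^ 3 + q ^ 2 := by omega
      apply Nat.eq_of_mul_eq_mul_left (show 0 < 2 by norm_num)
      calc 2 * ((q + 1) / 2 * q ^ 2) = 2 * ((q + 1) / 2) * q ^ 2 := by ring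
        _ = (q + 1) * q ^ 2 := by rw [h2a]
        _ = q ^ 3 + q ^ 2 := by ring
        _ = 2 * ((q ^ 3 + q ^ 2) / 2) := h2b.symm
    have ic : (q ^ 3 - 1) / 2 + (q + 1) / 2 = (q ^ 3 + q) / 2 := by omega
    have idd : (q ^ 3 - 1) / 2 + (q ^ 3 + 1) / 2 = q ^ 3 := by omega
    have ie : (q ^ 3 - 1) / 2 + (q ^ 3 + q ^ 2) / 2 = q ^ 3 + (q ^ 2 - 1) / 2 := by omega
    have iff' : (q ^ 2 - 1) / 2 + 1 = (q ^ 2 + 1) / 2 := by omega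
    -- the functional identity
    have hid3 : ∀ y : F, y ^ ((q ^ 3 + q) / 2) - a * y + a ^ (q ^ 2 + 1) * y ^ ((q ^ 2 + 1) / 2)
        = y ^ ((q ^ 3 - 1) / 2) * G (y ^ ((q + 1) / 2)) := by
      intro y
      have t1 : y ^ ((q ^ 3 - 1) / 2) * y ^ ((q + 1) / 2) = y ^ ((q ^ 3 + q) / 2) := by
        rw [← pow_add, ic]
      have t2 : y ^ ((q ^ 3 - 1) / 2) * y ^ ((q ^ 3 + 1) / 2) = y := by
        rw [← pow_add, idd, hpow3]
      have t3 : y ^ ((q ^ 3 - 1) / 2) * y ^ ((q ^ 3 + q ^ 2) / 2) = y ^ ((q ^ 2 + 1) / 2) := by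
        rw [← pow_add, ie, pow_add, hpow3, ← pow_succ', iff']
      rw [hGapp, ← pow_mul y ((q + 1) / 2) (q ^ 2 - q + 1), ← pow_mul y ((q + 1) / 2) (q ^ 2),
        ia, ib]
      calc y ^ ((q ^ 3 + q) / 2) - a * y + a ^ (q ^ 2 + 1) * y ^ ((q ^ 2 + 1) / 2)
          = y ^ ((q ^ 3 + q) / 2)
            - a * (y ^ ((q ^ 3 - 1) / 2) * y ^ ((q ^ 3 + 1) / 2))
            + a ^ (q ^ 2 + 1) * (y ^ ((q ^ 3 - 1) / 2) * y ^ ((q ^ 3 + q ^ 2) / 2)) := by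
            rw [t2, t3]
        _ = y ^ ((q ^ 3 - 1) / 2) * y ^ ((q + 1) / 2)
            - a * (y ^ ((q ^ 3 - 1) / 2) * y ^ ((q ^ 3 + 1) / 2))
            + a ^ (q ^ 2 + 1) * (y ^ ((q ^ 3 - 1) / 2) * y ^ ((q ^ 3 + q ^ 2) / 2)) := by
            rw [t1]
        _ = _ := by ring
    -- G is odd
    have hoddE1 : Odd (q ^ 2 - q + 1) := by rw [Nat.odd_iff]; omega
    have hoddE2 : Odd (q ^ 2) := by rw [Nat.odd_iff]; omega
    have hGodd : ∀ t : F, G (-t) = -G t := by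
      intro t
      rw [hGapp, hGapp, hoddE1.neg_pow, hoddE2.neg_pow]; ring
    -- char F is odd
    have hp2 : 2 < p := by
      rcases hp.two_le.lt_or_eq with h | h
      · exact h
      · exfalso
        have : (2 : ℕ) ∣ q := by
          rw [← hpk, ← h]; exact dvd_pow_self 2 hk.ne'
        omega
    haveI : Fact (2 < p) := ⟨hp2⟩
    have hneg1 : (-1 : F) ≠ 1 := CharP.neg_one_ne_one F p
    -- gcd fact
    have hgcd : Nat.gcd ((q + 1) / 2) ((q ^ 3 - 1) / 2) = 1 := by
      have h1 : Nat.gcd ((q + 1) / 2) ((q ^ 3 - 1) / 2) ∣ q + 1 :=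
        (Nat.gcd_dvd_left _ _).trans ⟨2, by omega⟩
      have h2 : Nat.gcd ((q + 1) / 2) ((q ^ 3 - 1) / 2) ∣ q ^ 3 - 1 :=
        (Nat.gcd_dvd_right _ _).trans ⟨2, by omega⟩
      have h3 : Nat.gcd ((q + 1) / 2) ((q ^ 3 - 1) / 2) ∣ q ^ 3 + 1 :=
        h1.trans ⟨q ^ 2 - q + 1, by zify [hle2]; ring⟩
      have h4 : Nat.gcd ((q + 1) / 2) ((q ^ 3 - 1) / 2) ∣ 2 := by
        have := Nat.dvd_sub h3 h2
        rwa [show q ^ 3 + 1 - (q ^ 3 - 1) = 2 by omega] at this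
      rcases (Nat.dvd_prime Nat.prime_two).mp h4 with h | h
      · exact h
      · exfalso
        have e1 : 2 ∣ (q + 1) / 2 := by
          have := Nat.gcd_dvd_left ((q + 1) / 2) ((q ^ 3 - 1) / 2); rwa [h] at this
        have e2 : 2 ∣ (q ^ 3 - 1) / 2 := by
          have := Nat.gcd_dvd_right ((q + 1) / 2) ((q ^ 3 - 1) / 2); rwa [h] at this
        omega
    -- uniqueness helpers
    have horder : ∀ z : F, z ^ ((q + 1) / 2) = 1 → z ^ ((q ^ 3 - 1) / 2) = 1 → z = 1 := by
      intro z hz1 hz2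
      have o1 := orderOf_dvd_of_pow_eq_one hz1
      have o2 := orderOf_dvd_of_pow_eq_one hz2
      have : orderOf z ∣ 1 := hgcd ▸ Nat.dvd_gcd o1 o2
      exact orderOf_eq_one_iff.mp (Nat.dvd_one.mp this)
    have hordneg : ∀ z : F, z ^ ((q + 1) / 2) = -1 → z ^ ((q ^ 3 - 1) / 2) = -1 → False := by
      intro z hz1 hz2
      have hzsq : z ^ 2 = 1 := by
        have o1 : orderOf z ∣ 2 * ((q + 1) / 2) := by
          apply orderOf_dvd_of_pow_eq_one
          rw [mul_comm, pow_mul, hz1]; norm_num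
        have o2 : orderOf z ∣ 2 * ((q ^ 3 - 1) / 2) := by
          apply orderOf_dvd_of_pow_eq_one
          rw [mul_comm, pow_mul, hz2]; norm_num
        have : orderOf z ∣ 2 := by
          have := Nat.dvd_gcd o1 o2
          rwa [Nat.gcd_mul_left, hgcd, mul_one] at this
        exact orderOf_dvd_iff_pow_eq_one.mp this
      have : (z - 1) * (z + 1) = 0 := by linear_combination hzsq
      rcases mul_eq_zero.mp this with h | h
      · have hz : z = 1 := by linear_combination h
        rw [hz, one_pow] at hz1
        exact hneg1 hz1.symm
      · have hz : z = -1 := by linear_combination h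
        rw [hz] at hz1 hz2
        have hodd1 : Odd ((q + 1) / 2) := by
          rcases Nat.even_or_odd ((q + 1) / 2) with he | ho
          · rw [he.neg_one_pow] at hz1; exact absurd hz1.symm hneg1
          · exact ho
        have hodd2 : Odd ((q ^ 3 - 1) / 2) := by
          rcases Nat.even_or_odd ((q ^ 3 - 1) / 2) with he | ho
          · rw [he.neg_one_pow] at hz2; exact absurd hz2.symm hneg1
          · exact ho
        rw [Nat.odd_iff] at hodd1 hodd2
        omega
    -- pow card sub one
    have hunit : ∀ y : F, y ≠ 0 → (y ^ ((q ^ 3 - 1) / 2)) ^ 2 = 1 := by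
      intro y hy
      rw [← pow_mul, show (q ^ 3 - 1) / 2 * 2 = q ^ 3 - 1 by omega, ← hF]
      exact FiniteField.pow_card_sub_one_eq_one y hy
    -- injectivity of part 3 map
    apply Finite.injective_iff_bijective.mp
    intro y1 y2 h
    simp only at h
    rw [hid3 y1, hid3 y2] at h
    have hn1ne : (q + 1) / 2 ≠ 0 := by omega
    have hn3ne : (q ^ 3 - 1) / 2 ≠ 0 := by omega
    by_cases hy1 : y1 = 0
    · subst hy1
      rw [zero_pow hn3ne, zero_mul] at h
      by_contra hy2
      have hy2' : y2 ≠ 0 := fun hh => hy2 hh.symm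
      have : G (y2 ^ ((q + 1) / 2)) = 0 := by
        rcases mul_eq_zero.mp h.symm with h' | h'
        · exact absurd h' (pow_ne_zero _ hy2')
        · exact h'
      have := hzero _ this
      exact hy2' ((pow_eq_zero_iff hn1ne).mp this)
    · by_cases hy2 : y2 = 0
      · subst hy2
        rw [zero_pow hn3ne, zero_mul] at h
        exfalso
        have : G (y1 ^ ((q + 1) / 2)) = 0 := by
          rcases mul_eq_zero.mp h with h' | h'
          · exact absurd h' (pow_ne_zero _ hy1)
          · exact h'
        have := hzero _ this
        exact hy1 ((pow_eq_zero_iff hn1ne).mp this)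
      · -- both nonzero
        have hu1 := hunit y1 hy1
        have hu2 := hunit y2 hy2
        have hy2n3 : y2 ^ ((q ^ 3 - 1) / 2) ≠ 0 := pow_ne_zero _ hy2
        have hcases : y1 ^ ((q ^ 3 - 1) / 2) = y2 ^ ((q ^ 3 - 1) / 2)
            ∨ y1 ^ ((q ^ 3 - 1) / 2) = -(y2 ^ ((q ^ 3 - 1) / 2)) := by
          have hfac : (y1 ^ ((q ^ 3 - 1) / 2) - y2 ^ ((q ^ 3 - 1) / 2))
              * (y1 ^ ((q ^ 3 - 1) / 2) + y2 ^ ((q ^ 3 - 1) / 2)) = 0 := by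
            linear_combination hu1 - hu2
          rcases mul_eq_zero.mp hfac with h' | h'
          · left; linear_combination h'
          · right; linear_combination h'
        have hzdef : y1 * y2⁻¹ ≠ 0 := mul_ne_zero hy1 (inv_ne_zero hy2)
        rcases hcases with he | he
        · -- same sign
          rw [he] at h
          have hGt := hGinj (mul_left_cancel₀ hy2n3 h)
          -- y1^{n1} = y2^{n1}, y1^{n3} = y2^{n3}  ⟹ y1 = y2
          have hz1 : (y1 * y2⁻¹) ^ ((q + 1) / 2) = 1 := by
            rw [mul_pow, hGt, inv_pow, mul_inv_cancel₀ (pow_ne_zero _ hy2)]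
          have hz2 : (y1 * y2⁻¹) ^ ((q ^ 3 - 1) / 2) = 1 := by
            rw [mul_pow, he, inv_pow, mul_inv_cancel₀ (pow_ne_zero _ hy2)]
          have := horder _ hz1 hz2
          field_simp at this
          exact this
        · -- opposite sign
          exfalso
          rw [he] at h
          have hGt : G (y1 ^ ((q + 1) / 2)) = -G (y2 ^ ((q + 1) / 2)) := by
            apply mul_left_cancel₀ hy2n3
            linear_combination -h
          rw [← hGodd] at hGt
          have ht := hGinj hGt
          have hz1 : (y1 * y2⁻¹) ^ ((q + 1) / 2) = -1 := by
            rw [mul_pow, ht, inv_pow]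
            field_simp
          have hz2 : (y1 * y2⁻¹) ^ ((q ^ 3 - 1) / 2) = -1 := by
            rw [mul_pow, he, inv_pow]
            field_simp
          exact hordneg _ hz1 hz2
end
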